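/- arXiv:1206.1387 — 8 statements merged into one kernel-verified Lean document; each statement's English description precedes it below -/
import Mathlib

section
/- Let 0 ≤ u. If 0 ≤ u ≤ q − 1, then ‖λ^{(m)}_u − π^{s_p(u)}/u!!‖ ≤ p^{−(s_p(u)+p−1)/(p−1)}. If u ≥ q, then ‖λ^{(m)}_u‖ ≤ p^{−(s_p(u)+p−1)/(p−1)}. (Equivalently: λ^{(m)}_u ≡ π^{s_p(u)}/u!! mod π^{s_p(u)+p−1} for 0 ≤ u ≤ q−1, and λ^{(m)}_u ≡ 0 mod π^{s_p(u)+p−1} for u ≥ q, in the valuation ring of K.) -/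
open scoped BigOperators

/-- `sp p u` is the sum of the base-`p` digits of `u`. -/
def sp (p u : ℕ) : ℕ := (Nat.digits p u).sum

/-- `u!!`, the product of the factorials of the base-`p` digits of `u`. -/
def dfac (p u : ℕ) : ℕ := ((Nat.digits p u).map Nat.factorial).prod

/-- The coefficient `λ^{(m)}_u = Σ_{r+q·s=u} (−1)^s π^{r+s}/(r!·s!)` of the
splitting function `θ_m(X) = exp(πX − πX^q)`, where `q = p^m`. -/
noncomputable def lam {K : Type} [Field K] (p m : ℕ) (π : K) (u : ℕ) : K :=
  ∑ s ∈ Finset.range (u / p ^ m + 1),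
    (-1 : K) ^ s * π ^ (u - p ^ m * s + s) /
      (((u - p ^ m * s).factorial : K) * (s.factorial : K))




private lemma factorial_add_prod (a b : ℕ) :
    (a + b).factorial = a.factorial * ∏ j ∈ Finset.range b, (a + 1 + j) := by
  induction b with
  | zero => simp
  | succ b ih =>
    rw [Finset.prod_range_succ, ← mul_assoc, ← ih, ← Nat.add_assoc, Nat.factorial_succ]
    ring

private lemma central (p : ℕ) (hp : p.Prime) (a : ℕ) :
    ∃ w : ℤ, ((p * a).factorial : ℤ) = (-(p : ℤ)) ^ a * (a.factorial : ℤ) * w ∧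
      (w : ZMod p) = 1 := by
  haveI := Fact.mk hp
  induction a with
  | zero => exact ⟨1, by simp, by simp⟩
  | succ a ih =>
    obtain ⟨w, hw, hw1⟩ := ih
    have hp1 : 1 ≤ p := hp.pos
    have h2 : (p * (a + 1)).factorial =
        (p * a).factorial * ∏ j ∈ Finset.range p, (p * a + 1 + j) := by
      rw [Nat.mul_add, Nat.mul_one, factorial_add_prod]
    have h3 : ∏ j ∈ Finset.range p, (p * a + 1 + j) =
        (∏ j ∈ Finset.range (p - 1), (p * a + 1 + j)) * (p * (a + 1)) := by
      have hps : p = (p - 1) + 1 := by omega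
      nth_rewrite 1 [hps]
      rw [Finset.prod_range_succ]
      have : p * a + 1 + (p - 1) = p * (a + 1) := by
        cases p with
        | zero => omega
        | succ k => ring_nf; omega
      rw [this]
    have hP : ((∏ j ∈ Finset.range (p - 1), (p * a + 1 + j) : ℕ) : ZMod p) = -1 := by
      rw [Nat.cast_prod]
      have hcongr : ∀ j ∈ Finset.range (p - 1),
          ((p * a + 1 + j : ℕ) : ZMod p) = ((j + 1 : ℕ) : ZMod p) := by
        intro j _
        push_cast
        rw [ZMod.natCast_self]
        ring
      rw [Finset.prod_congr rfl hcongr, ← Nat.cast_prod,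
        Finset.prod_range_add_one_eq_factorial]
      exact ZMod.wilsons_lemma p
    refine ⟨-(w * (∏ j ∈ Finset.range (p - 1), (p * a + 1 + j) : ℕ)), ?_, ?_⟩
    · rw [h2, h3]
      push_cast [hw, Nat.factorial_succ]
      ring
    · rw [Int.cast_neg, Int.cast_mul, hw1, Int.cast_natCast, hP]
      ring




private lemma sp_le (p n : ℕ) : sp p n ≤ n := Nat.digit_sum_le p n

private lemma legendre (p : ℕ) (hp : p.Prime) (n : ℕ) :
    (p - 1) * padicValNat p n.factorial = n - sp p n := by
  haveI := Fact.mk hp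
  exact sub_one_mul_padicValNat_factorial n

private lemma sp_rec (p n : ℕ) (hp : p.Prime) (hn : n ≠ 0) :
    sp p n = n % p + sp p (n / p) := by
  unfold sp
  rw [Nat.digits_def' hp.one_lt (Nat.pos_of_ne_zero hn), List.sum_cons]

private lemma dfac_rec (p n : ℕ) (hp : p.Prime) (hn : n ≠ 0) :
    dfac p n = (n % p).factorial * dfac p (n / p) := by
  unfold dfac
  rw [Nat.digits_def' hp.one_lt (Nat.pos_of_ne_zero hn), List.map_cons, List.prod_cons]

private lemma E_rec (p n : ℕ) (hp : p.Prime) (hn : n ≠ 0) :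
    padicValNat p n.factorial = n / p + padicValNat p (n / p).factorial := by
  have h1 := legendre p hp n
  have h2 := legendre p hp (n / p)
  have h3 := sp_rec p n hp hn
  have h4 := sp_le p n
  have h5 := sp_le p (n / p)
  have h6 : p * (n / p) + n % p = n := Nat.div_add_mod n p
  have hp2 : 2 ≤ p := hp.two_le
  have key : (p - 1) * padicValNat p n.factorial =
      (p - 1) * (n / p + padicValNat p (n / p).factorial) := by
    rw [Nat.mul_add]
    have hpa : (p - 1) * (n / p) = p * (n / p) - n / p := by
      rw [Nat.sub_one_mul]
    have hda : n / p ≤ p * (n / p) := Nat.le_mul_of_pos_left _ hp.pos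
    have hdn : n / p ≤ n := Nat.div_le_self n p
    omega
  exact Nat.eq_of_mul_eq_mul_left (by omega) key





private lemma antons (p : ℕ) (hp : p.Prime) : ∀ n : ℕ, ∃ z : ℤ,
    (n.factorial : ℤ) = (-(p : ℤ)) ^ (padicValNat p n.factorial) * z ∧
      (z : ZMod p) = (dfac p n : ZMod p) := by
  haveI := Fact.mk hp
  intro n
  induction n using Nat.strong_induction_on with
  | _ n ih =>
    rcases eq_or_ne n 0 with rfl | hn
    · exact ⟨1, by simp, by simp [dfac]⟩
    obtain ⟨z, hz, hz1⟩ := ih (n / p) (Nat.div_lt_self (Nat.pos_of_ne_zero hn) hp.one_lt)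
    obtain ⟨w, hw, hw1⟩ := central p hp (n / p)
    have hb : n % p < p := Nat.mod_lt _ hp.pos
    have hn' : n = p * (n / p) + n % p := (Nat.div_add_mod n p).symm
    have h2 : (n.factorial : ℤ) = ((p * (n / p)).factorial : ℤ) *
        ((∏ j ∈ Finset.range (n % p), (p * (n / p) + 1 + j) : ℕ) : ℤ) := by
      rw [← Nat.cast_mul, ← factorial_add_prod]
      norm_cast
      rw [← hn']
    have hP : ((∏ j ∈ Finset.range (n % p), (p * (n / p) + 1 + j) : ℕ) : ZMod p) =
        ((n % p).factorial : ZMod p) := by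
      rw [Nat.cast_prod]
      have hcongr : ∀ j ∈ Finset.range (n % p),
          ((p * (n / p) + 1 + j : ℕ) : ZMod p) = ((j + 1 : ℕ) : ZMod p) := by
        intro j _
        push_cast
        rw [ZMod.natCast_self]
        ring
      rw [Finset.prod_congr rfl hcongr, ← Nat.cast_prod,
        Finset.prod_range_add_one_eq_factorial]
    refine ⟨w * z * ((∏ j ∈ Finset.range (n % p), (p * (n / p) + 1 + j) : ℕ) : ℤ), ?_, ?_⟩
    · rw [h2, hw, hz, E_rec p n hp hn, pow_add]
      ring
    · rw [Int.cast_mul, Int.cast_mul, hw1, hz1, Int.cast_natCast, hP,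
        dfac_rec p n hp hn]
      push_cast
      ring




private lemma sp_pow_mul (p m s : ℕ) (hp : 1 < p) : sp p (p ^ m * s) = sp p s := by
  rcases eq_or_ne s 0 with rfl | hs
  · simp
  unfold sp
  rw [Nat.digits_base_pow_mul hp (Nat.pos_of_ne_zero hs), List.sum_append,
    List.sum_replicate]
  simp

private lemma dfac_pow_mul (p m s : ℕ) (hp : 1 < p) : dfac p (p ^ m * s) = dfac p s := by
  rcases eq_or_ne s 0 with rfl | hs
  · simp
  unfold dfac
  rw [Nat.digits_base_pow_mul hp (Nat.pos_of_ne_zero hs), List.map_append,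
    List.prod_append, List.map_replicate]
  simp [Nat.factorial]

private lemma dfac_ne (p : ℕ) (hp : p.Prime) (n : ℕ) : ((dfac p n : ℕ) : ZMod p) ≠ 0 := by
  haveI := Fact.mk hp
  induction n using Nat.strong_induction_on with
  | _ n ih =>
    rcases eq_or_ne n 0 with rfl | hn
    · simp [dfac]
    have hrec : dfac p n = (n % p).factorial * dfac p (n / p) := by
      unfold dfac
      rw [Nat.digits_def' hp.one_lt (Nat.pos_of_ne_zero hn), List.map_cons, List.prod_cons]
    rw [hrec, Nat.cast_mul]
    apply mul_ne_zero
    · rw [Ne, ZMod.natCast_eq_zero_iff]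
      intro hdvd
      have := (Nat.Prime.dvd_factorial hp).mp hdvd
      have := Nat.mod_lt n hp.pos
      omega
    · exact ih (n / p) (Nat.div_lt_self (Nat.pos_of_ne_zero hn) hp.one_lt)

private lemma lucasq (p : ℕ) (hp : p.Prime) (m u s : ℕ) :
    ((u.choose (p ^ m * s) : ℤ) : ZMod p) = (((u / p ^ m).choose s : ℤ) : ZMod p) := by
  haveI := Fact.mk hp
  have h := Choose.choose_modEq_choose_mul_prod_range_choose
    (p := p) (n := u) (k := p ^ m * s) m
  rw [← ZMod.intCast_eq_intCast_iff] at h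
  rw [h]
  have h1 : p ^ m * s / p ^ m = s := by
    rw [Nat.mul_div_cancel_left _ (Nat.pos_of_ne_zero (pow_ne_zero m hp.pos.ne'))]
  have h2 : ∀ i ∈ Finset.range m, p ^ m * s / p ^ i % p = 0 := by
    intro i hi
    rw [Finset.mem_range] at hi
    have : p ^ m * s = p ^ i * (p ^ (m - i) * s) := by
      rw [← mul_assoc, ← pow_add]
      congr 2
      omega
    rw [this, Nat.mul_div_cancel_left _ (Nat.pos_of_ne_zero (pow_ne_zero i hp.pos.ne'))]
    have h3 : p ^ (m - i) * s = p * (p ^ (m - i - 1) * s) := by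
      rw [← mul_assoc, ← pow_succ']
      congr 2
      omega
    rw [h3, Nat.mul_mod_right]
  rw [h1, Finset.prod_congr rfl (fun i hi => by rw [h2 i hi, Nat.choose_zero_right]),
    Finset.prod_const_one]
  push_cast
  ring

private lemma Tsum (p m : ℕ) (hp : p.Prime) (u : ℕ) :
    ((∑ s ∈ Finset.range (u / p ^ m + 1), (-1 : ℤ) ^ s * u.choose (p ^ m * s) : ℤ) : ZMod p)
      = (if u < p ^ m then 1 else 0) := by
  haveI := Fact.mk hp
  by_cases h : u < p ^ m
  · rw [if_pos h, Nat.div_eq_of_lt h]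
    simp
  · rw [if_neg h]
    push_cast [Int.cast_sum]
    have hcongr : ∀ s ∈ Finset.range (u / p ^ m + 1),
        (-1 : ZMod p) ^ s * ((u.choose (p ^ m * s) : ℤ) : ZMod p)
          = (-1 : ZMod p) ^ s * (((u / p ^ m).choose s : ℤ) : ZMod p) := by
      intro s _
      rw [lucasq p hp m u s]
    calc ∑ s ∈ Finset.range (u / p ^ m + 1),
          (-1 : ZMod p) ^ s * ((u.choose (p ^ m * s) : ℕ) : ZMod p)
        = ∑ s ∈ Finset.range (u / p ^ m + 1),
          (-1 : ZMod p) ^ s * (((u / p ^ m).choose s : ℕ) : ZMod p) := by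
          refine Finset.sum_congr rfl fun s hs => ?_
          have := hcongr s hs
          push_cast at this ⊢
          exact this
      _ = ((∑ s ∈ Finset.range (u / p ^ m + 1), (-1 : ℤ) ^ s * ((u / p ^ m).choose s) : ℤ)
            : ZMod p) := by push_cast; ring
      _ = 0 := by
          rw [Int.alternating_sum_range_choose_of_ne]
          · simp
          · have : p ^ m ≤ u := le_of_not_gt h
            have hq : 0 < p ^ m := pow_pos hp.pos m
            have h1 : 1 ≤ u / p ^ m := (Nat.one_le_div_iff hq).mpr this
            omega


private lemma norm_int_le_one {K : Type} [NormedField K] (hna : IsUltrametricDist K)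
    (z : ℤ) : ‖(z : K)‖ ≤ 1 := by
  haveI := hna
  exact IsUltrametricDist.norm_intCast_le_one K z

private lemma norm_int_unit {K : Type} [NormedField K] (hna : IsUltrametricDist K)
    (p : ℕ) (hp : p.Prime) (hpnorm : ‖(p : K)‖ = (p : ℝ)⁻¹) {b : ℤ}
    (hb : ¬ (p : ℤ) ∣ b) : ‖(b : K)‖ = 1 := by
  haveI := hna
  have hb1 : ‖(b : K)‖ ≤ 1 := norm_int_le_one hna b
  have hco : IsCoprime (p : ℤ) b := by
    rw [Int.isCoprime_iff_gcd_eq_one]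
    have hnd : ¬ p ∣ b.natAbs := by
      intro hd
      exact hb (Int.natAbs_dvd_natAbs.mp (by simpa using hd))
    have := (Nat.Prime.coprime_iff_not_dvd hp).mpr hnd
    simpa [Int.gcd] using this
  obtain ⟨x, y, hxy⟩ := hco
  by_contra hne
  have hlt : ‖(b : K)‖ < 1 := lt_of_le_of_ne hb1 hne
  have h1 : (1 : K) = (x : K) * (p : K) + (y : K) * (b : K) := by
    have := congrArg (fun t : ℤ => (t : K)) hxy
    push_cast at this
    exact this.symm
  have hp1 : (1 : ℝ) < p := by exact_mod_cast hp.one_lt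
  have hterm1 : ‖(x : K) * (p : K)‖ < 1 := by
    rw [norm_mul, hpnorm]
    calc ‖(x : K)‖ * (p : ℝ)⁻¹ ≤ 1 * (p : ℝ)⁻¹ := by
          apply mul_le_mul_of_nonneg_right (norm_int_le_one hna x) (by positivity)
      _ < 1 := by rw [one_mul]; exact inv_lt_one_of_one_lt₀ hp1
  have hterm2 : ‖(y : K) * (b : K)‖ < 1 := by
    rw [norm_mul]
    calc ‖(y : K)‖ * ‖(b : K)‖ ≤ 1 * ‖(b : K)‖ :=
          mul_le_mul_of_nonneg_right (norm_int_le_one hna y) (norm_nonneg _)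
      _ < 1 := by rw [one_mul]; exact hlt
  have : ‖(1 : K)‖ < 1 := by
    rw [h1]
    calc ‖(x : K) * (p : K) + (y : K) * (b : K)‖
        ≤ max ‖(x : K) * (p : K)‖ ‖(y : K) * (b : K)‖ :=
          IsUltrametricDist.norm_add_le_max _ _
      _ < 1 := max_lt hterm1 hterm2
  rw [norm_one] at this
  exact lt_irrefl 1 this

private lemma norm_int_dvd_le {K : Type} [NormedField K] (hna : IsUltrametricDist K)
    (p : ℕ) (hpnorm : ‖(p : K)‖ = (p : ℝ)⁻¹) {b : ℤ}
    (hb : (p : ℤ) ∣ b) : ‖(b : K)‖ ≤ (p : ℝ)⁻¹ := by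
  obtain ⟨c, rfl⟩ := hb
  push_cast
  rw [norm_mul, hpnorm]
  calc (p : ℝ)⁻¹ * ‖(c : K)‖ ≤ (p : ℝ)⁻¹ * 1 :=
        mul_le_mul_of_nonneg_left (norm_int_le_one hna c) (by positivity)
    _ = (p : ℝ)⁻¹ := mul_one _

private lemma norm_bound_eq {K : Type} [NormedField K] (p : ℕ) (hp : p.Prime)
    (hpnorm : ‖(p : K)‖ = (p : ℝ)⁻¹) (π : K) (hπ : π ^ (p - 1) = -(p : K)) (k : ℕ) :
    ‖π‖ ^ k * (p : ℝ)⁻¹ = (p : ℝ) ^ (-(((k : ℝ) + (p : ℝ) - 1) / ((p : ℝ) - 1))) := by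
  have hp1 : (1 : ℝ) < (p : ℝ) := by exact_mod_cast hp.one_lt
  have hppos : (0 : ℝ) < p := by linarith
  have hpm1 : ((p : ℝ) - 1) ≠ 0 := by linarith
  have hcast : ((p - 1 : ℕ) : ℝ) = (p : ℝ) - 1 := by
    have := hp.one_le
    push_cast [Nat.cast_sub this]
    ring
  have hπn : ‖π‖ ^ ((p - 1 : ℕ)) = (p : ℝ)⁻¹ := by
    rw [← norm_pow, hπ, norm_neg, hpnorm]
  have hnormπ : ‖π‖ = (p : ℝ) ^ (-(1 / ((p : ℝ) - 1))) := by
    have h2 : ((‖π‖ ^ ((p - 1 : ℕ)) : ℝ)) ^ ((1 : ℝ) / ((p : ℝ) - 1)) = ‖π‖ := by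
      rw [← Real.rpow_natCast ‖π‖ (p - 1), ← Real.rpow_mul (norm_nonneg π), hcast]
      rw [mul_one_div, div_self hpm1, Real.rpow_one]
    rw [← h2, hπn, ← Real.rpow_neg_one (p : ℝ), ← Real.rpow_mul hppos.le]
    congr 1
    ring
  rw [hnormπ, ← Real.rpow_natCast ((p:ℝ) ^ (-(1 / ((p : ℝ) - 1)))) k,
    ← Real.rpow_mul hppos.le, ← Real.rpow_neg_one (p : ℝ), ← Real.rpow_add hppos]
  congr 1
  field_simp
  ring

/-- `Ev p n` is the `p`-adic valuation of `n!`. -/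
private def Ev (p n : ℕ) : ℕ := padicValNat p n.factorial

/-- The `p`-unit part of `n!` relative to `(-p)^(Ev p n)`. -/
private noncomputable def Zf (p n : ℕ) : ℤ :=
  if h : p.Prime then Classical.choose (antons p h n) else 1

private lemma Zf_fact (p n : ℕ) (hp : p.Prime) :
    (n.factorial : ℤ) = (-(p : ℤ)) ^ (Ev p n) * Zf p n := by
  rw [Zf, dif_pos hp]
  exact (Classical.choose_spec (antons p hp n)).1

private lemma Zf_mod (p n : ℕ) (hp : p.Prime) :
    ((Zf p n : ℤ) : ZMod p) = (dfac p n : ZMod p) := by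
  rw [Zf, dif_pos hp]
  exact (Classical.choose_spec (antons p hp n)).2

private lemma Zf_ne (p n : ℕ) (hp : p.Prime) : Zf p n ≠ 0 := by
  intro h
  have := Zf_fact p n hp
  rw [h, mul_zero] at this
  exact n.factorial_ne_zero (by exact_mod_cast this)

/-- `cc p m u s` is the number of carries when adding `u - p^m s` and `p^m s` in base `p`. -/
private def cc (p m u s : ℕ) : ℕ := Ev p u - Ev p (u - p ^ m * s) - Ev p (p ^ m * s)

private lemma Ev_add (p m u s : ℕ) (hp : p.Prime) (h : p ^ m * s ≤ u) :
    Ev p u = padicValNat p (u.choose (p ^ m * s)) + Ev p (u - p ^ m * s) + Ev p (p ^ m * s)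
      ∧ cc p m u s = padicValNat p (u.choose (p ^ m * s)) := by
  haveI := Fact.mk hp
  have h1 : u.choose (p ^ m * s) * (p ^ m * s).factorial * (u - p ^ m * s).factorial
      = u.factorial := Nat.choose_mul_factorial_mul_factorial h
  have h2 := congrArg (padicValNat p) h1
  rw [padicValNat.mul (mul_ne_zero (Nat.choose_pos h).ne' (Nat.factorial_ne_zero _))
      (Nat.factorial_ne_zero _),
    padicValNat.mul (Nat.choose_pos h).ne' (Nat.factorial_ne_zero _)] at h2
  constructor
  · unfold Ev
    omega
  · unfold cc Ev
    omega

private lemma key_int (p m u s : ℕ) (hp : p.Prime) (h : p ^ m * s ≤ u) :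
    (u.choose (p ^ m * s) : ℤ) * Zf p (u - p ^ m * s) * Zf p (p ^ m * s)
      = (-(p : ℤ)) ^ (cc p m u s) * Zf p u := by
  have hnegp0 : (-(p : ℤ)) ≠ 0 := by
    simp [hp.pos.ne']
  obtain ⟨hEv, hcc⟩ := Ev_add p m u s hp h
  apply mul_left_cancel₀ (pow_ne_zero (Ev p (u - p ^ m * s) + Ev p (p ^ m * s)) hnegp0)
  have h1 : u.choose (p ^ m * s) * (p ^ m * s).factorial * (u - p ^ m * s).factorial
      = u.factorial := Nat.choose_mul_factorial_mul_factorial h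
  have h1' : (u.choose (p ^ m * s) : ℤ) * ((p ^ m * s).factorial : ℤ)
      * ((u - p ^ m * s).factorial : ℤ) = (u.factorial : ℤ) := by exact_mod_cast h1
  calc (-(p : ℤ)) ^ (Ev p (u - p ^ m * s) + Ev p (p ^ m * s)) *
        ((u.choose (p ^ m * s) : ℤ) * Zf p (u - p ^ m * s) * Zf p (p ^ m * s))
      = (u.choose (p ^ m * s) : ℤ) *
          ((-(p : ℤ)) ^ (Ev p (p ^ m * s)) * Zf p (p ^ m * s)) *
          ((-(p : ℤ)) ^ (Ev p (u - p ^ m * s)) * Zf p (u - p ^ m * s)) := by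
        rw [pow_add]; ring
    _ = (u.choose (p ^ m * s) : ℤ) * ((p ^ m * s).factorial : ℤ)
          * ((u - p ^ m * s).factorial : ℤ) := by
        rw [← Zf_fact _ _ hp, ← Zf_fact _ _ hp]
    _ = (u.factorial : ℤ) := h1'
    _ = (-(p : ℤ)) ^ (Ev p u) * Zf p u := Zf_fact _ _ hp
    _ = (-(p : ℤ)) ^ (Ev p (u - p ^ m * s) + Ev p (p ^ m * s)) *
          ((-(p : ℤ)) ^ (cc p m u s) * Zf p u) := by
        rw [← mul_assoc, ← pow_add]
        congr 2
        omega

private lemma key_mod (p m u s : ℕ) (hp : p.Prime) (h : p ^ m * s ≤ u) :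
    ((u.choose (p ^ m * s) : ℤ) : ZMod p) * (dfac p (u - p ^ m * s) : ZMod p)
        * (dfac p s : ZMod p)
      = (0 : ZMod p) ^ (cc p m u s) * (dfac p u : ZMod p) := by
  have := congrArg (fun t : ℤ => (t : ZMod p)) (key_int p m u s hp h)
  simp only [Int.cast_mul, Int.cast_pow, Int.cast_neg, Int.cast_natCast] at this
  rw [Zf_mod _ _ hp, Zf_mod _ _ hp, Zf_mod _ _ hp, dfac_pow_mul p m s hp.one_lt,
    ZMod.natCast_self, neg_zero] at this
  exact_mod_cast this

private lemma sp_id (p m u s : ℕ) (hp : p.Prime) (h : p ^ m * s ≤ u) :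
    sp p (u - p ^ m * s) + sp p s = sp p u + (p - 1) * cc p m u s := by
  obtain ⟨hEv, hcc⟩ := Ev_add p m u s hp h
  have L1 := legendre p hp (u - p ^ m * s)
  have L2 := legendre p hp (p ^ m * s)
  have L3 := legendre p hp u
  have hqm : sp p (p ^ m * s) = sp p s := sp_pow_mul p m s hp.one_lt
  rw [hqm] at L2
  have hb1 := sp_le p (u - p ^ m * s)
  have hb2 : sp p s ≤ p ^ m * s := by
    have := sp_le p (p ^ m * s)
    omega
  have hb3 := sp_le p u
  have hru : (u - p ^ m * s) + p ^ m * s = u := Nat.sub_add_cancel h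
  have hdist : (p - 1) * Ev p u = (p - 1) * Ev p (u - p ^ m * s)
      + (p - 1) * Ev p (p ^ m * s) + (p - 1) * cc p m u s := by
    rw [show Ev p u = Ev p (u - p ^ m * s) + Ev p (p ^ m * s) + cc p m u s by omega]
    ring
  unfold Ev at hdist
  omega

private lemma exp_id (p m u s : ℕ) (hp : p.Prime) (h : p ^ m * s ≤ u) :
    (u - p ^ m * s) + s = sp p u + (p - 1) * cc p m u s
      + ((p - 1) * Ev p (u - p ^ m * s) + (p - 1) * Ev p s) := by
  have L1 := legendre p hp (u - p ^ m * s)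
  have L4 := legendre p hp s
  have hid := sp_id p m u s hp h
  have hb1 := sp_le p (u - p ^ m * s)
  have hb2 := sp_le p s
  unfold Ev
  omega

private lemma term_lemma {K : Type} [Field K] [CharZero K] (p m u s : ℕ) (hp : p.Prime)
    (h : p ^ m * s ≤ u) (π : K) (hπ : π ^ (p - 1) = -(p : K)) :
    (-1 : K) ^ s * π ^ (u - p ^ m * s + s) /
        (((u - p ^ m * s).factorial : K) * (s.factorial : K))
      = π ^ sp p u *
        ((((-1) ^ s * (-(p : ℤ)) ^ (cc p m u s) : ℤ) : K) /
          ((Zf p (u - p ^ m * s) * Zf p s : ℤ) : K)) := by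
  have hpK0 : (-(p : K)) ≠ 0 := by
    simp [Nat.cast_ne_zero, hp.pos.ne']
  have hZK0 : ∀ k : ℕ, ((Zf p k : ℤ) : K) ≠ 0 := fun k => Int.cast_ne_zero.mpr (Zf_ne p k hp)
  have hfacK : ∀ k : ℕ, ((k.factorial : ℕ) : K) = (-(p : K)) ^ (Ev p k) * ((Zf p k : ℤ) : K) := by
    intro k
    have := congrArg (fun t : ℤ => (t : K)) (Zf_fact p k hp)
    push_cast at this
    exact this
  rw [exp_id p m u s hp h, pow_add, pow_add, pow_add, pow_mul, pow_mul, pow_mul, hπ,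
    hfacK (u - p ^ m * s), hfacK s]
  push_cast
  rw [← mul_div_assoc, div_eq_div_iff
    (mul_ne_zero (mul_ne_zero (pow_ne_zero _ hpK0) (hZK0 _))
      (mul_ne_zero (pow_ne_zero _ hpK0) (hZK0 _)))
    (mul_ne_zero (hZK0 _) (hZK0 _))]
  ring

/-- Principal part of the coefficients of Dwork's splitting function `θ_m`:
`λ^{(m)}_u ≡ π^{s_p(u)}/u!! mod π^{s_p(u)+p−1}` for `0 ≤ u ≤ q−1`, and
`λ^{(m)}_u ≡ 0 mod π^{s_p(u)+p−1}` for `u ≥ q`. -/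
theorem lam_congruence (p m : ℕ) (hp : p.Prime) (hm : 1 ≤ m)
    {K : Type} [NormedField K] [CharZero K]
    (hna : IsUltrametricDist K)
    (hpnorm : ‖(p : K)‖ = (p : ℝ)⁻¹)
    (π : K) (hπ : π ^ (p - 1) = -(p : K))
    (u : ℕ) :
    (u ≤ p ^ m - 1 →
      ‖lam p m π u - π ^ sp p u / (dfac p u : K)‖ ≤
        (p : ℝ) ^ (-(((sp p u : ℝ) + (p : ℝ) - 1) / ((p : ℝ) - 1)))) ∧
    (p ^ m ≤ u →
      ‖lam p m π u‖ ≤ (p : ℝ) ^ (-(((sp p u : ℝ) + (p : ℝ) - 1) / ((p : ℝ) - 1)))) := by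
  haveI := Fact.mk hp
  haveI := hna
  have hq0 : 0 < p ^ m := pow_pos hp.pos m
  set N : ℤ := ∑ s ∈ Finset.range (u / p ^ m + 1),
      ((-1) ^ s * (-(p : ℤ)) ^ (cc p m u s)) *
        ∏ t ∈ (Finset.range (u / p ^ m + 1)).erase s, (Zf p (u - p ^ m * t) * Zf p t)
    with hN
  set B : ℤ := ∏ s ∈ Finset.range (u / p ^ m + 1), (Zf p (u - p ^ m * s) * Zf p s) with hB
  set T : ℤ := ∑ s ∈ Finset.range (u / p ^ m + 1), (-1 : ℤ) ^ s * u.choose (p ^ m * s)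
    with hT
  set ε : ℤ := if u < p ^ m then 1 else 0 with hε
  have hqs_le : ∀ s ∈ Finset.range (u / p ^ m + 1), p ^ m * s ≤ u := by
    intro s hs
    rw [Finset.mem_range, Nat.lt_succ_iff] at hs
    calc p ^ m * s = s * p ^ m := mul_comm _ _
      _ ≤ u := (Nat.le_div_iff_mul_le hq0).mp hs
  have hden0 : ∀ s : ℕ, Zf p (u - p ^ m * s) * Zf p s ≠ 0 := fun s =>
    mul_ne_zero (Zf_ne p _ hp) (Zf_ne p _ hp)
  have hdenK0 : ∀ s : ℕ, ((Zf p (u - p ^ m * s) * Zf p s : ℤ) : K) ≠ 0 := fun s =>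
    Int.cast_ne_zero.mpr (hden0 s)
  have hB0K : ((B : ℤ) : K) ≠ 0 := by
    rw [hB]
    push_cast
    exact Finset.prod_ne_zero_iff.mpr fun s _ => by
      push_cast at hdenK0
      exact hdenK0 s
  have hdfne : dfac p u ≠ 0 := by
    intro h
    exact dfac_ne p hp u (by rw [h]; simp)
  have hduK : ((dfac p u : ℕ) : K) ≠ 0 := Nat.cast_ne_zero.mpr hdfne
  -- closed form for lam
  have lam_eq : lam p m π u = π ^ sp p u * (((N : ℤ) : K) / ((B : ℤ) : K)) := by
    unfold lam
    rw [Finset.sum_congr rfl (fun s hs => term_lemma p m u s hp (hqs_le s hs) π hπ),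
      ← Finset.mul_sum]
    congr 1
    rw [eq_div_iff hB0K, Finset.sum_mul, hN]
    push_cast
    refine Finset.sum_congr rfl fun s hs => ?_
    rw [hB]
    push_cast
    rw [← Finset.mul_prod_erase _ _ hs, ← mul_assoc, div_mul_cancel₀ _ (by
      push_cast at hdenK0
      exact hdenK0 s)]
  -- per-term mod p identity
  have hterm_mod : ∀ s ∈ Finset.range (u / p ^ m + 1),
      ((((-1) ^ s * (-(p : ℤ)) ^ (cc p m u s)) * (dfac p u : ℤ)
        - (-1) ^ s * (u.choose (p ^ m * s) : ℤ) * (Zf p (u - p ^ m * s) * Zf p s) : ℤ)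
          : ZMod p) = 0 := by
    intro s hs
    have hk := key_mod p m u s hp (hqs_le s hs)
    push_cast at hk
    push_cast
    rw [ZMod.natCast_self, neg_zero, Zf_mod _ _ hp, Zf_mod _ _ hp]
    linear_combination (-(-1 : ZMod p) ^ s) * hk
  -- main divisibility
  have hsplit : N * (dfac p u : ℤ) - B * T =
      ∑ s ∈ Finset.range (u / p ^ m + 1),
        (((-1) ^ s * (-(p : ℤ)) ^ (cc p m u s)) * (dfac p u : ℤ)
          - (-1) ^ s * (u.choose (p ^ m * s) : ℤ) * (Zf p (u - p ^ m * s) * Zf p s))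
          * ∏ t ∈ (Finset.range (u / p ^ m + 1)).erase s, (Zf p (u - p ^ m * t) * Zf p t)
      := by
    rw [hN, hB, hT, Finset.sum_mul, Finset.mul_sum, ← Finset.sum_sub_distrib]
    refine Finset.sum_congr rfl fun s hs => ?_
    rw [← Finset.mul_prod_erase _ _ hs]
    ring
  have hTε : ((T : ℤ) : ZMod p) = ((ε : ℤ) : ZMod p) := by
    rw [hT, hε, Tsum p m hp u]
    split_ifs <;> simp
  have hN2 : ((N * (dfac p u : ℤ) - ε * B : ℤ) : ZMod p) = 0 := by
    have h1 : ((N * (dfac p u : ℤ) - B * T : ℤ) : ZMod p) = 0 := by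
      rw [hsplit]
      push_cast
      refine Finset.sum_eq_zero fun s hs => ?_
      have h2 := hterm_mod s hs
      push_cast at h2
      rw [h2, zero_mul]
    push_cast at h1 hTε ⊢
    linear_combination h1 + ((B : ℤ) : ZMod p) * hTε
  have hdvd : (p : ℤ) ∣ (N * (dfac p u : ℤ) - ε * B) :=
    (ZMod.intCast_zmod_eq_zero_iff_dvd _ p).mp hN2
  have hB2 : ¬ (p : ℤ) ∣ (B * (dfac p u : ℤ)) := by
    intro hd
    have h0 : ((B * (dfac p u : ℤ) : ℤ) : ZMod p) = 0 :=
      (ZMod.intCast_zmod_eq_zero_iff_dvd _ p).mpr hd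
    have hBmod : ((B : ℤ) : ZMod p) ≠ 0 := by
      rw [hB]
      push_cast
      refine Finset.prod_ne_zero_iff.mpr fun s _ => ?_
      rw [Zf_mod _ _ hp, Zf_mod _ _ hp]
      exact mul_ne_zero (dfac_ne p hp _) (dfac_ne p hp _)
    push_cast at h0
    exact (mul_ne_zero hBmod (dfac_ne p hp u)) h0
  have hmaster : lam p m π u - ((ε : ℤ) : K) * π ^ sp p u / ((dfac p u : ℕ) : K)
      = π ^ sp p u *
        (((N * (dfac p u : ℤ) - ε * B : ℤ) : K) / ((B * (dfac p u : ℤ) : ℤ) : K)) := by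
    rw [lam_eq]
    push_cast
    field_simp
  have hnorm : ‖lam p m π u - ((ε : ℤ) : K) * π ^ sp p u / ((dfac p u : ℕ) : K)‖
      ≤ (p : ℝ) ^ (-(((sp p u : ℝ) + (p : ℝ) - 1) / ((p : ℝ) - 1))) := by
    rw [hmaster, norm_mul, norm_pow, norm_div, norm_int_unit hna p hp hpnorm hB2, div_one]
    calc ‖π‖ ^ sp p u * ‖((N * (dfac p u : ℤ) - ε * B : ℤ) : K)‖
        ≤ ‖π‖ ^ sp p u * (p : ℝ)⁻¹ :=
          mul_le_mul_of_nonneg_left (norm_int_dvd_le hna p hpnorm hdvd) (by positivity)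
      _ = _ := norm_bound_eq p hp hpnorm π hπ (sp p u)
  constructor
  · intro hu
    have h1 : u < p ^ m := by omega
    have hε1 : ε = 1 := if_pos h1
    rw [hε1] at hnorm
    simpa using hnorm
  · intro hu
    have h1 : ¬ u < p ^ m := not_lt.mpr hu
    have hε0 : ε = 0 := if_neg h1
    rw [hε0] at hnorm
    simpa using hnorm
end

section
/- The set of rational numbers { s_{D,p}(r)/r : r ≥ 1 } has a minimum; that is, there exists r₀ ≥ 1 such that for every r ≥ 1 one has s_{D,p}(r₀)/r₀ ≤ s_{D,p}(r)/r. -/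
open scoped BigOperators
open scoped Classical

variable {ι : Type} [Fintype ι]

/-- The coordinatewise sum `Σ_{d ∈ D} u_d · d`. -/
def sigmaSum (D : Finset (ι → ℕ)) (U : D → ℕ) (k : ι) : ℕ :=
  ∑ d, U d * (d : ι → ℕ) k

/-- Membership in the set `E_{D,p}(r)`. -/
def memE (p : ℕ) (D : Finset (ι → ℕ)) (r : ℕ) (U : D → ℕ) : Prop :=
  (∀ d, U d ≤ p ^ r - 1) ∧
  (∀ k, (p ^ r - 1) ∣ sigmaSum D U k ∧ 0 < sigmaSum D U k)

/-- The `p`-weight `s_p(U)` of a tuple `U`. -/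
def spU (p : ℕ) (D : Finset (ι → ℕ)) (U : D → ℕ) : ℕ := ∑ d, sp p (U d)

/-- `s_{D,p}(r)`, the minimal `p`-weight of an element of `E_{D,p}(r)`. -/
noncomputable def sDp (p : ℕ) (D : Finset (ι → ℕ)) (r : ℕ) : ℕ :=
  sInf { s | ∃ U : D → ℕ, memE p D r U ∧ spU p D U = s }

/-- The `p`-density `δ_p(D)` of the set `D`. -/
noncomputable def density (p : ℕ) (D : Finset (ι → ℕ)) : ℝ :=
  (1 / ((p : ℝ) - 1)) * sInf { x : ℝ | ∃ r : ℕ, 1 ≤ r ∧ x = (sDp p D r : ℝ) / (r : ℝ) }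

/-- A minimal solution in `E_{D,p}(r)`. -/
def minimalSol (p : ℕ) (D : Finset (ι → ℕ)) (r : ℕ) (U : D → ℕ) : Prop :=
  memE p D r U ∧ (spU p D U : ℝ) = ((p : ℝ) - 1) * (r : ℝ) * density p D

/-- `φ_r(U) = (1/(p^r − 1)) Σ_{d ∈ D} u_d · d`. -/
def phiMap (p : ℕ) (D : Finset (ι → ℕ)) (r : ℕ) (U : D → ℕ) (k : ι) : ℕ :=
  sigmaSum D U k / (p ^ r - 1)

/-- The shift `δ_r` on `{0, …, p^r − 1}`. -/
def shiftFun (p r u : ℕ) : ℕ := if u = p ^ r - 1 then u else (p * u) % (p ^ r - 1)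

/-- The componentwise action of the shift `δ_r` on tuples. -/
def shiftE (p : ℕ) (D : Finset (ι → ℕ)) (r : ℕ) (U : D → ℕ) : D → ℕ :=
  fun d => shiftFun p r (U d)

/-- The support `φ_U : ℤ/rℤ → ℕ^n` of a solution `U ∈ E_{D,p}(r)`. -/
def suppMap (p : ℕ) (D : Finset (ι → ℕ)) (r : ℕ) (U : D → ℕ) (k : ZMod r) : ι → ℕ :=
  phiMap p D r ((shiftE p D r)^[k.val] U)

/-- Membership in `MI_{D,p}(r)`: minimal irreducible solutions. -/
def memMI (p : ℕ) (D : Finset (ι → ℕ)) (r : ℕ) (U : D → ℕ) : Prop :=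
  minimalSol p D r U ∧ Function.Injective (suppMap p D r U)

/-- The `p`-minimal support `Σ_p(D)`. -/
def minSupport (p : ℕ) (D : Finset (ι → ℕ)) : Set (ι → ℕ) :=
  { e | ∃ r : ℕ, 1 ≤ r ∧ ∃ U : D → ℕ, memMI p D r U ∧ e ∈ Set.range (suppMap p D r U) }

/-- `ψ(U)`: the tuple of last base-`p` digits of `U`. -/
def psiMap (p : ℕ) (D : Finset (ι → ℕ)) (U : D → ℕ) : D → ℕ := fun d => U d % p

/-- The set `V(e, e')` of digit tuples of minimal irreducible solutions with
`φ_U(−1) = e` and `φ_U(0) = e'`. -/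
def Vset (p : ℕ) (D : Finset (ι → ℕ)) (e e' : ι → ℕ) : Set (D → ℕ) :=
  { v | ∃ r : ℕ, 1 ≤ r ∧ ∃ U : D → ℕ, memMI p D r U ∧
      suppMap p D r U (-1) = e ∧ suppMap p D r U 0 = e' ∧ psiMap p D U = v }

/-- The weight `w(V) = Σ_{d ∈ D} v_d`. -/
def weightV (D : Finset (ι → ℕ)) (v : D → ℕ) : ℕ := ∑ d, v d

/-
If `U ∈ E_{D,p}(r)` has `Σ u_d d = a (p^r - 1)`, then for `m < r` the vector
`c_m = (a + Σ (u_d mod p^m) d) / p^m` is `φ_r` of the rotation of `U` bringing its last `m` digits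
to the front, so `c_m ≤ Σ_{d ∈ D} d` coordinatewise. Once `r` exceeds the number `N` of such
vectors, two indices `s < s + t` have `c_s = c_{s+t}`; then the `t` digits of `U` in positions
`s, …, s + t - 1` form an element of `E_{D,p}(t)` and the other `r - t` digits an element of
`E_{D,p}(r - t)`, of the same total `p`-weight. So `s(t) + s(r - t) ≤ s(r)` for every `r > N`, and
by the mediant inequality every ratio `s(r)/r` is bounded below by one with `r ≤ N`.
-/

open Finset

lemma sp_mul_pow_add {p : ℕ} (hp : 1 < p) (a : ℕ) {k b : ℕ} (hb : b < p ^ k) :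
    sp p (a * p ^ k + b) = sp p a + sp p b := by
  rcases Nat.eq_zero_or_pos a with rfl | ha
  · simp [sp]
  have hlen : (Nat.digits p b).length ≤ k := by
    rcases Nat.eq_zero_or_pos b with rfl | hb0
    · simp
    · rw [Nat.length_digits p b hp hb0.ne']
      exact Nat.log_lt_of_lt_pow hb0.ne' hb
  have h := Nat.digits_append_zeroes_append_digits
    (k := k - (Nat.digits p b).length) (n := b) hp ha
  rw [Nat.add_sub_cancel' hlen, mul_comm, add_comm] at h
  rw [sp, ← h]
  simp [sp, add_comm]

lemma block_removal_arith {p e t s a c X Y Z : ℕ} (hp : 0 < p)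
    (hA : (X * p ^ t + Y) * p ^ s + Z = a * (p ^ (e + t + s) - 1))
    (hZ : p ^ s * c = a + Z) (hYZ : p ^ (t + s) * c = a + (Y * p ^ s + Z)) :
    Y = c * (p ^ t - 1) ∧ X * p ^ s + Z = a * (p ^ (e + s) - 1) := by
  have hpow : ∀ n, (0 : ℤ) < (p : ℤ) ^ n := fun n => pow_pos (by exact_mod_cast hp) n
  zify [Nat.one_le_pow t p hp, Nat.one_le_pow (e + t + s) p hp,
    Nat.one_le_pow (e + s) p hp] at hA hZ hYZ ⊢
  constructor
  · refine mul_right_cancel₀ (hpow s).ne' ?_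
    linear_combination hZ - hYZ
  · refine mul_right_cancel₀ (hpow t).ne' ?_
    linear_combination hA - (p : ℤ) ^ t * hZ + hYZ

lemma min_div_le_add_div_add {K : Type*} [Field K] [LinearOrder K] [IsStrictOrderedRing K]
    {a b x y : K} (hx : 0 < x) (hy : 0 < y) : min (a / x) (b / y) ≤ (a + b) / (x + y) := by
  rcases le_total (a / x) (b / y) with h | h
  · refine (min_le_left _ _).trans ?_
    rw [div_le_div_iff₀ hx hy] at h
    rw [div_le_div_iff₀ hx (add_pos hx hy)]
    linarith
  · refine (min_le_right _ _).trans ?_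
    rw [div_le_div_iff₀ hy hx] at h
    rw [div_le_div_iff₀ hy (add_pos hx hy)]
    linarith

theorem exists_forall_div_le_div_of_add_le {f : ℕ → ℕ} {N : ℕ}
    (hf : ∀ r, N < r → ∃ t, 0 < t ∧ t < r ∧ f t + f (r - t) ≤ f r) :
    ∃ r₀, 1 ≤ r₀ ∧ ∀ r, 1 ≤ r → (f r₀ : ℚ) / r₀ ≤ f r / r := by
  have hsmall : ∀ r, 1 ≤ r → ∃ r' ∈ Icc 1 N, (f r' : ℚ) / r' ≤ f r / r := by
    intro r
    induction r using Nat.strong_induction_on with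
    | _ r ih =>
      intro hr
      by_cases hrN : r ≤ N
      · exact ⟨r, mem_Icc.2 ⟨hr, hrN⟩, le_rfl⟩
      obtain ⟨t, ht, htr, hsum⟩ := hf r (not_le.1 hrN)
      have hmediant : min ((f t : ℚ) / t) ((f (r - t) : ℚ) / (r - t : ℕ)) ≤ f r / r := by
        refine (min_div_le_add_div_add (by positivity) (by simp [htr])).trans ?_
        rw [← Nat.cast_add t, Nat.add_sub_cancel' htr.le]
        gcongr
        exact_mod_cast hsum
      rcases min_le_iff.1 hmediant with h | h
      · obtain ⟨r', hr', h'⟩ := ih t htr ht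
        exact ⟨r', hr', h'.trans h⟩
      · obtain ⟨r', hr', h'⟩ := ih (r - t) (by omega) (by omega)
        exact ⟨r', hr', h'.trans h⟩
  obtain ⟨r₁, hr₁, -⟩ := hsmall 1 le_rfl
  obtain ⟨r₀, hr₀, hmin⟩ := (Icc 1 N).exists_min_image (fun r => (f r : ℚ) / r) ⟨r₁, hr₁⟩
  refine ⟨r₀, (mem_Icc.1 hr₀).1, fun r hr => ?_⟩
  obtain ⟨r', hr', hle⟩ := hsmall r hr
  exact (hmin r' hr').trans hle

section

omit [Fintype ι]

lemma sigmaSum_mul_add (D : Finset (ι → ℕ)) (V W : D → ℕ) (n : ℕ) (k : ι) :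
    sigmaSum D (fun d => V d * n + W d) k = sigmaSum D V k * n + sigmaSum D W k := by
  simp only [sigmaSum, sum_mul, ← sum_add_distrib]
  exact sum_congr rfl fun d _ => by ring

lemma sigmaSum_le_mul {D : Finset (ι → ℕ)} {U : D → ℕ} {n : ℕ} (hU : ∀ d, U d ≤ n) (k : ι) :
    sigmaSum D U k ≤ n * ∑ d : D, (d : ι → ℕ) k := by
  rw [mul_sum]
  exact sum_le_sum fun d _ => Nat.mul_le_mul_right _ (hU d)

lemma spU_mul_pow_add {p : ℕ} (hp : 1 < p) (D : Finset (ι → ℕ)) (V W : D → ℕ) {m : ℕ}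
    (hW : ∀ d, W d < p ^ m) :
    spU p D (fun d => V d * p ^ m + W d) = spU p D V + spU p D W := by
  simp only [spU, ← sum_add_distrib]
  exact sum_congr rfl fun d _ => sp_mul_pow_add hp _ (hW d)

variable {p : ℕ} {D : Finset (ι → ℕ)} {r : ℕ} {U : D → ℕ}

lemma memE_of_sigmaSum_eq (hp : 1 < p) (hr : 0 < r) (hU : ∀ d, U d < p ^ r) (a : ι → ℕ)
    (ha : ∀ k, 0 < a k) (hσ : ∀ k, sigmaSum D U k = a k * (p ^ r - 1)) : memE p D r U := by
  refine ⟨fun d => Nat.le_sub_one_of_lt (hU d), fun k => ⟨?_, ?_⟩⟩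
  · rw [hσ k]
    exact dvd_mul_left _ _
  · rw [hσ k]
    exact Nat.mul_pos (ha k) (Nat.sub_pos_of_lt (Nat.one_lt_pow hr.ne' hp))

lemma sigmaSum_eq_phiMap_mul (hU : memE p D r U) (k : ι) :
    sigmaSum D U k = phiMap p D r U k * (p ^ r - 1) :=
  (Nat.div_mul_cancel (hU.2 k).1).symm

lemma phiMap_pos (hU : memE p D r U) (k : ι) : 0 < phiMap p D r U k := by
  have h := (hU.2 k).2
  rw [sigmaSum_eq_phiMap_mul hU k] at h
  exact Nat.pos_of_mul_pos_right h

lemma phiMap_le (hU : memE p D r U) (k : ι) : phiMap p D r U k ≤ ∑ d : D, (d : ι → ℕ) k :=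
  Nat.div_le_of_le_mul (sigmaSum_le_mul hU.1 k)

lemma sDp_le_spU (hU : memE p D r U) : sDp p D r ≤ spU p D U :=
  Nat.sInf_le ⟨U, hU, rfl⟩

lemma exists_memE_spU_eq_sDp (hp : 1 < p) (hcoord : ∀ k : ι, ∃ d ∈ D, 0 < d k) (hr : 0 < r) :
    ∃ U, memE p D r U ∧ spU p D U = sDp p D r := by
  have hfull : memE p D r fun _ => p ^ r - 1 := by
    refine memE_of_sigmaSum_eq hp hr (fun _ => Nat.sub_lt (Nat.pow_pos (by omega)) one_pos)
      (fun k => ∑ d : D, (d : ι → ℕ) k) (fun k => ?_) (fun k => ?_)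
    · obtain ⟨d, hd, hdk⟩ := hcoord k
      exact sum_pos' (fun _ _ => Nat.zero_le _) ⟨⟨d, hd⟩, mem_univ _, hdk⟩
    · simp only [sigmaSum, sum_mul]
      exact sum_congr rfl fun _ _ => mul_comm _ _
  exact Nat.sInf_mem (s := {s | ∃ U, memE p D r U ∧ spU p D U = s}) ⟨_, _, hfull, rfl⟩

/-- For `U ∈ E_{D,p}(r)` and `m ≤ r` this is `φ_r` of the rotation of `U` that moves its last
`m` base-`p` digits to the front. -/
def rotatedPhi (p : ℕ) (D : Finset (ι → ℕ)) (r : ℕ) (U : D → ℕ) (m : ℕ) (k : ι) : ℕ :=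
  (phiMap p D r U k + sigmaSum D (fun d => U d % p ^ m) k) / p ^ m

lemma pow_mul_rotatedPhi (hp : 0 < p) (hU : memE p D r U) {m : ℕ} (hm : m ≤ r) (k : ι) :
    p ^ m * rotatedPhi p D r U m k = phiMap p D r U k + sigmaSum D (fun d => U d % p ^ m) k := by
  set a := phiMap p D r U k
  set X := sigmaSum D (fun d => U d / p ^ m) k
  set Y := sigmaSum D (fun d => U d % p ^ m) k
  have hsplit : sigmaSum D U k = X * p ^ m + Y := by
    simpa only [Nat.div_add_mod'] using
      sigmaSum_mul_add D (fun d => U d / p ^ m) (fun d => U d % p ^ m) (p ^ m) k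
  have hsum : a + Y + X * p ^ m = p ^ m * (p ^ (r - m) * a) := by
    have hpr : a ≤ a * p ^ r := Nat.le_mul_of_pos_right a (Nat.pow_pos hp)
    calc a + Y + X * p ^ m = a + a * (p ^ r - 1) := by
          rw [← sigmaSum_eq_phiMap_mul hU, hsplit]; ring
      _ = p ^ m * (p ^ (r - m) * a) := by
          rw [Nat.mul_sub, mul_one, Nat.add_sub_cancel' hpr, ← mul_assoc, ← pow_add,
            Nat.add_sub_cancel' hm, mul_comm]
  exact Nat.mul_div_cancel' ((Nat.dvd_add_left (dvd_mul_left _ X)).mp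
    (hsum ▸ dvd_mul_right _ _))

lemma rotatedPhi_le (hp : 0 < p) (hU : memE p D r U) (m : ℕ) (k : ι) :
    rotatedPhi p D r U m k ≤ ∑ d : D, (d : ι → ℕ) k := by
  have hpm : 0 < p ^ m := Nat.pow_pos hp
  have hlow := sigmaSum_le_mul (fun d => Nat.le_sub_one_of_lt (Nat.mod_lt (U d) hpm)) k
  refine Nat.div_le_of_le_mul ?_
  calc phiMap p D r U k + sigmaSum D (fun d => U d % p ^ m) k
      ≤ ∑ d : D, (d : ι → ℕ) k + (p ^ m - 1) * ∑ d : D, (d : ι → ℕ) k :=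
        Nat.add_le_add (phiMap_le hU k) hlow
    _ = p ^ m * ∑ d : D, (d : ι → ℕ) k := by
      rw [Nat.sub_one_mul, Nat.add_sub_cancel' (Nat.le_mul_of_pos_left _ hpm)]

lemma memE_block_and_rest (hp : 1 < p) {e t s : ℕ} (ht : 0 < t) (hes : 0 < e + s)
    {H M L : D → ℕ} (hH : ∀ d, H d < p ^ e) (hM : ∀ d, M d < p ^ t) (hL : ∀ d, L d < p ^ s)
    (hUdec : U = fun d => (H d * p ^ t + M d) * p ^ s + L d) (hU : memE p D (e + t + s) U)
    {c : ι → ℕ} (hcL : ∀ k, p ^ s * c k = phiMap p D (e + t + s) U k + sigmaSum D L k)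
    (hcML : ∀ k, p ^ (t + s) * c k =
      phiMap p D (e + t + s) U k + sigmaSum D (fun d => M d * p ^ s + L d) k) :
    memE p D t M ∧ memE p D (e + s) (fun d => H d * p ^ s + L d) ∧
      spU p D M + spU p D (fun d => H d * p ^ s + L d) = spU p D U := by
  have hsums : ∀ k, sigmaSum D M k = c k * (p ^ t - 1) ∧
      sigmaSum D (fun d => H d * p ^ s + L d) k =
        phiMap p D (e + t + s) U k * (p ^ (e + s) - 1) := by
    intro k
    have hA := sigmaSum_eq_phiMap_mul hU k
    have hML := hcML k
    rw [sigmaSum_mul_add] at hML ⊢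
    conv_lhs at hA => rw [hUdec, sigmaSum_mul_add, sigmaSum_mul_add]
    exact block_removal_arith (by omega) hA (hcL k) hML
  refine ⟨memE_of_sigmaSum_eq hp ht hM c (fun k => ?_) (fun k => (hsums k).1),
    memE_of_sigmaSum_eq hp hes (fun d => ?_) _ (phiMap_pos hU) (fun k => (hsums k).2), ?_⟩
  · exact Nat.pos_of_mul_pos_left ((hcL k).symm ▸ Nat.add_pos_left (phiMap_pos hU k) _)
  · calc H d * p ^ s + L d < (H d + 1) * p ^ s := by linarith [hL d]
      _ ≤ p ^ e * p ^ s := Nat.mul_le_mul_right _ (hH d)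
      _ = p ^ (e + s) := (pow_add p e s).symm
  · rw [hUdec, spU_mul_pow_add hp D _ _ hL, spU_mul_pow_add hp D _ _ hL,
      spU_mul_pow_add hp D _ _ hM]
    ring

end

lemma exists_sDp_add_sDp_le_spU {p : ℕ} (hp : 1 < p) {D : Finset (ι → ℕ)} {r : ℕ}
    (hr : ∏ k, (∑ d : D, (d : ι → ℕ) k + 1) < r) {U : D → ℕ} (hU : memE p D r U) :
    ∃ t, 0 < t ∧ t < r ∧ sDp p D t + sDp p D (r - t) ≤ spU p D U := by
  obtain ⟨s, hs, m, hm, hne, heq⟩ := exists_ne_map_eq_of_card_lt_of_maps_to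
    (s := range r) (t := Fintype.piFinset fun k => range (∑ d : D, (d : ι → ℕ) k + 1))
    (by simpa [Fintype.card_piFinset] using hr) (f := rotatedPhi p D r U)
    (fun m _ => Fintype.mem_piFinset.2 fun k =>
      mem_range.2 (Nat.lt_succ_of_le (rotatedPhi_le (by omega) hU m k)))
  wlog hlt : s < m generalizing s m
  · exact this m hm s hs hne.symm heq.symm (hne.lt_or_gt.resolve_left hlt)
  rw [mem_range] at hs hm
  obtain ⟨e, t, rfl, rfl⟩ : ∃ e t, m = t + s ∧ r = e + t + s :=
    ⟨r - m, m - s, by omega, by omega⟩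
  have hUlt : ∀ d, U d < p ^ s * (p ^ t * p ^ e) := fun d => by
    rw [← pow_add, ← pow_add, show s + (t + e) = e + t + s by ring]
    exact Nat.lt_of_le_sub_one (Nat.pow_pos (by omega)) (hU.1 d)
  have hUdec : U = fun d => (U d / p ^ s / p ^ t * p ^ t + U d / p ^ s % p ^ t) * p ^ s
      + U d % p ^ s := funext fun d => by rw [Nat.div_add_mod', Nat.div_add_mod']
  have hlo : (fun d => U d % p ^ (t + s)) = fun d => U d / p ^ s % p ^ t * p ^ s + U d % p ^ s :=
    funext fun d => by rw [pow_add, mul_comm, Nat.mod_mul]; ring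
  have hL : ∀ d, U d % p ^ s < p ^ s := fun d => Nat.mod_lt _ (Nat.pow_pos (by omega))
  have hM : ∀ d, U d / p ^ s % p ^ t < p ^ t := fun d => Nat.mod_lt _ (Nat.pow_pos (by omega))
  obtain ⟨hME, hWE, hsp⟩ := memE_block_and_rest hp (by omega) (by omega)
    (fun d => Nat.div_lt_of_lt_mul (Nat.div_lt_of_lt_mul (hUlt d))) hM hL hUdec hU
    (pow_mul_rotatedPhi (by omega) hU (by omega))
    (fun k => by rw [heq, ← hlo]; exact pow_mul_rotatedPhi (by omega) hU (by omega) k)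
  refine ⟨t, by omega, by omega, ?_⟩
  rw [show e + t + s - t = e + s by omega, ← hsp]
  exact add_le_add (sDp_le_spU hME) (sDp_le_spU hWE)

theorem sDp_ratio_has_min_general (p : ℕ) (hp : p.Prime) {ι : Type} [Fintype ι]
    (D : Finset (ι → ℕ))
    (hcoord : ∀ k : ι, ∃ d ∈ D, 0 < d k) :
    ∃ r₀ : ℕ, 1 ≤ r₀ ∧ ∀ r : ℕ, 1 ≤ r →
      (sDp p D r₀ : ℚ) / (r₀ : ℚ) ≤ (sDp p D r : ℚ) / (r : ℚ) := by
  refine exists_forall_div_le_div_of_add_le (N := ∏ k, (∑ d : D, (d : ι → ℕ) k + 1))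
    fun r hr => ?_
  obtain ⟨U, hU, hUsp⟩ := exists_memE_spU_eq_sDp hp.one_lt hcoord (r := r) (by omega)
  rw [← hUsp]
  exact exists_sDp_add_sDp_le_spU hp.one_lt hr hU

/-- The set `{ s_{D,p}(r)/r : r ≥ 1 }` of rational numbers has a minimum. -/
theorem sDp_ratio_has_min (p : ℕ) (hp : p.Prime) {ι : Type} [Fintype ι] [Nonempty ι]
    (D : Finset (ι → ℕ)) (hD : D.Nonempty)
    (hcoord : ∀ k : ι, ∃ d ∈ D, 0 < d k) :
    ∃ r₀ : ℕ, 1 ≤ r₀ ∧ ∀ r : ℕ, 1 ≤ r →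
      (sDp p D r₀ : ℚ) / (r₀ : ℚ) ≤ (sDp p D r : ℚ) / (r : ℚ) :=
  sDp_ratio_has_min_general p hp D hcoord
end

section
/- Let u be a positive integer and let ū be the unique integer in {1, …, p^r − 1} with u ≡ ū mod (p^r − 1). Then s_p(u) ≥ s_p(ū). -/
open scoped BigOperators
open scoped Classical

variable {ι : Type} [Fintype ι]

lemma sp_subadd' (p : ℕ) (hp : p.Prime) (a b : ℕ) :
    (Nat.digits p (a + b)).sum ≤ (Nat.digits p a).sum + (Nat.digits p b).sum := by
  haveI : Fact p.Prime := ⟨hp⟩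
  have hA := sub_one_mul_padicValNat_factorial (p := p) a
  have hB := sub_one_mul_padicValNat_factorial (p := p) b
  have hAB := sub_one_mul_padicValNat_factorial (p := p) (a + b)
  have hdvd : p ^ (padicValNat p a.factorial + padicValNat p b.factorial) ∣ (a+b).factorial := by
    rw [pow_add]
    exact (mul_dvd_mul pow_padicValNat_dvd pow_padicValNat_dvd).trans
      (Nat.factorial_mul_factorial_dvd_factorial_add a b)
  have hle : padicValNat p a.factorial + padicValNat p b.factorial
      ≤ padicValNat p (a+b).factorial :=
    (padicValNat_dvd_iff_le (Nat.factorial_ne_zero _)).mp hdvd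
  have h1 := Nat.digit_sum_le p a
  have h2 := Nat.digit_sum_le p b
  have h3 := Nat.digit_sum_le p (a + b)
  have key : (a - (Nat.digits p a).sum) + (b - (Nat.digits p b).sum)
      ≤ a + b - (Nat.digits p (a + b)).sum := by
    rw [← hA, ← hB, ← hAB, ← Nat.mul_add]
    exact Nat.mul_le_mul_left _ hle
  omega

lemma sp_split (p r q s : ℕ) (hp : 1 < p) (hs : s < p ^ r) (hq : 0 < q) :
    (Nat.digits p (s + p ^ r * q)).sum = (Nat.digits p s).sum + (Nat.digits p q).sum := by
  have hlen : (Nat.digits p s).length ≤ r := by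
    rcases Nat.eq_zero_or_pos s with rfl | hs0
    · simp
    · rw [Nat.digits_len p s hp (by omega)]
      have := Nat.log_lt_of_lt_pow (by omega) hs
      omega
  have : r = (Nat.digits p s).length + (r - (Nat.digits p s).length) := by omega
  rw [this, ← Nat.digits_append_zeroes_append_digits hp hq]
  simp

/-- If `u > 0` and `ū ∈ {1, …, p^r − 1}` satisfies `u ≡ ū mod (p^r − 1)`,
then `s_p(u) ≥ s_p(ū)`. -/
theorem sp_reduction_le (p r : ℕ) (hp : p.Prime) (hr : 1 ≤ r)
    (u ub : ℕ) (hu : 0 < u) (hub1 : 1 ≤ ub) (hub2 : ub ≤ p ^ r - 1)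
    (hcong : u ≡ ub [MOD p ^ r - 1]) :
    sp p ub ≤ sp p u := by
  have hp1 : 1 < p := hp.one_lt
  have hPr : 1 < p ^ r := Nat.one_lt_pow (by omega) hp1
  set m := p ^ r - 1 with hm
  have hm1 : 1 ≤ m := by omega
  induction u using Nat.strong_induction_on with
  | _ u ih =>
    rcases lt_or_ge u (p ^ r) with hlt | hge
    · have hud : u = ub := by
        have hd : ((m : ℕ) : ℤ) ∣ (ub : ℤ) - u := hcong.dvd
        have h0 : (ub : ℤ) - u = 0 := Int.eq_zero_of_abs_lt_dvd hd (by
          rw [abs_lt]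
          have hmz : ((m : ℕ) : ℤ) = (p ^ r : ℕ) - 1 := by
            rw [hm]; push_cast [Nat.one_le_of_lt hPr]; ring
          rw [hmz]
          have h1 : (u : ℤ) < ((p ^ r : ℕ) : ℤ) := by exact_mod_cast hlt
          have h2 : (ub : ℤ) ≤ ((p ^ r : ℕ) : ℤ) - 1 := by
            have hx : (ub : ℤ) ≤ ((m : ℕ) : ℤ) := by exact_mod_cast hub2
            omega
          have h3 : 1 ≤ (u : ℤ) := by exact_mod_cast hu
          have h4 : 1 ≤ (ub : ℤ) := by exact_mod_cast hub1
          omega)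
        omega
      rw [hud]
    · set q := u / p ^ r with hqdef
      set s := u % p ^ r with hsdef
      clear_value q
      have hPr0 : 0 < p ^ r := lt_trans Nat.one_pos hPr
      have hq1 : 1 ≤ q := by rw [hqdef]; exact (Nat.one_le_div_iff hPr0).mpr hge
      clear_value s
      have hslt : s < p ^ r := by rw [hsdef]; exact Nat.mod_lt _ hPr0
      have hsplit : u = s + p ^ r * q := by
        rw [hqdef, hsdef]; exact (Nat.mod_add_div u (p ^ r)).symm
      have h2q : 2 * q ≤ p ^ r * q := Nat.mul_le_mul_right q hPr
      have hu' : q + s < u := by omega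
      have hq_le : q ≤ p ^ r * q := Nat.le_mul_of_pos_left q (by omega)
      have hmq : m * q + q = p ^ r * q := by
        rw [hm, Nat.sub_mul, one_mul]; omega
      have hdvd : m ∣ u - (q + s) := ⟨q, by omega⟩
      have hcong' : q + s ≡ ub [MOD m] :=
        ((Nat.modEq_iff_dvd' hu'.le).mpr hdvd).trans hcong
      have hih := ih (q + s) hu' (by omega) hcong'
      calc sp p ub ≤ sp p (q + s) := hih
        _ ≤ sp p q + sp p s := sp_subadd' p hp q s
        _ = sp p u := by
            rw [hsplit]
            unfold sp
            rw [sp_split p r q s hp1 hslt hq1]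
            omega
end

section
/- Let r ≥ 1 and let (u_d)_{d∈D} be nonnegative integers (not necessarily bounded by p^r − 1) such that Σ_{d∈D} u_d·d ≡ 0 mod (p^r − 1) coordinatewise and every coordinate of Σ_{d∈D} u_d·d is positive. Then Σ_{d∈D} s_p(u_d) ≥ s_{D,p}(r). -/
open scoped BigOperators
open scoped Classical

variable {ι : Type} [Fintype ι]


lemma sp_eq {b : ℕ} (hb : 1 < b) (u : ℕ) : sp b u = u % b + sp b (u / b) := by
  rcases Nat.eq_zero_or_pos u with rfl | hu
  · simp [sp]
  · rw [sp, Nat.digits_def' hb hu, List.sum_cons]; rfl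

lemma div_le_sub_one {b x : ℕ} (hb : 1 < b) (hx : 0 < x) : x / b ≤ x - 1 := by
  have h1 : x / b ≤ x / 2 := Nat.div_le_div_left hb (by omega)
  have h2 : x / 2 < x := Nat.div_lt_self hx (by omega)
  omega

lemma sp_add_le_aux {b : ℕ} (hb : 1 < b) : ∀ n x y, x + y ≤ n → sp b (x + y) ≤ sp b x + sp b y := by
  intro n
  induction n with
  | zero =>
    intro x y hxy
    obtain ⟨rfl, rfl⟩ : x = 0 ∧ y = 0 := by omega
    simp [sp]
  | succ n ih =>
    intro x y hxy
    rcases Nat.eq_zero_or_pos x with rfl | hx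
    · simp
    rcases Nat.eq_zero_or_pos y with rfl | hy
    · simp
    have hb0 : 0 < b := by omega
    have hxd := div_le_sub_one hb hx
    have hyd := div_le_sub_one hb hy
    have hxm : x % b < b := Nat.mod_lt _ hb0
    have hym : y % b < b := Nat.mod_lt _ hb0
    rw [sp_eq hb (x + y), sp_eq hb x, sp_eq hb y, Nat.add_mod, Nat.add_div hb0]
    by_cases hc : b ≤ x % b + y % b
    · have h1 : (x % b + y % b) % b = x % b + y % b - b := by
        rw [Nat.mod_eq_sub_mod hc, Nat.mod_eq_of_lt (by omega)]
      rw [if_pos hc, h1]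
      have h2 : sp b (x / b + y / b + 1) ≤ sp b (x / b) + sp b (y / b + 1) := by
        rw [add_assoc]
        exact ih _ _ (by omega)
      have h3 : sp b (y / b + 1) ≤ sp b (y / b) + sp b 1 := ih _ _ (by omega)
      have h4 : sp b 1 = 1 := by simp [sp, Nat.digits_def' hb, Nat.mod_eq_of_lt hb, Nat.div_eq_of_lt hb]
      omega
    · rw [if_neg hc, Nat.mod_eq_of_lt (by omega), add_zero]
      have h2 : sp b (x / b + y / b) ≤ sp b (x / b) + sp b (y / b) := ih _ _ (by omega)
      omega

lemma sp_add_le {b : ℕ} (hb : 1 < b) (x y : ℕ) : sp b (x + y) ≤ sp b x + sp b y :=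
  sp_add_le_aux hb (x + y) x y le_rfl

lemma sp_split_s4 {b : ℕ} (hb : 1 < b) (r : ℕ) : ∀ u, sp b (u % b ^ r) + sp b (u / b ^ r) = sp b u := by
  induction r with
  | zero => intro u; simp [sp, Nat.mod_one]
  | succ r ih =>
    intro u
    have h1 : u % b ^ (r + 1) % b = u % b := Nat.mod_mod_of_dvd u (dvd_pow_self b (by omega))
    have h2 : u % b ^ (r + 1) / b = u / b % b ^ r := by
      rw [pow_succ, mul_comm, Nat.mod_mul_right_div_self]
    have h3 : u / b ^ (r + 1) = u / b / b ^ r := by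
      rw [Nat.div_div_eq_div_mul, pow_succ, mul_comm]
    rw [sp_eq hb (u % b ^ (r + 1)), h1, h2, h3, sp_eq hb u, add_assoc, ih (u / b)]

/-- step inequality -/
lemma step_lt {m u : ℕ} (hm : 2 ≤ m) (hmu : m ≤ u) : u % m + u / m < u := by
  have h1 : m * (u / m) + u % m = u := Nat.div_add_mod u m
  have h2 : 1 ≤ u / m := (Nat.one_le_div_iff (by omega)).2 hmu
  have h3 : u / m < m * (u / m) := by
    calc u / m < 2 * (u / m) := by omega
    _ ≤ m * (u / m) := Nat.mul_le_mul_right _ hm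
  generalize hT : m * (u / m) = T at h1 h3
  omega

def red (m u : ℕ) : ℕ :=
  if h : 2 ≤ m ∧ m ≤ u then red m (u % m + u / m) else u
termination_by u
decreasing_by exact step_lt h.1 h.2

lemma red_lt {m : ℕ} (hm : 2 ≤ m) : ∀ u, red m u < m := by
  intro u
  induction u using Nat.strong_induction_on with
  | _ u ih =>
    rw [red]
    split
    · next h => exact ih _ (step_lt h.1 h.2)
    · next h => omega

lemma red_pos {m : ℕ} (hm : 2 ≤ m) : ∀ u, 0 < u → 0 < red m u := by
  intro u
  induction u using Nat.strong_induction_on with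
  | _ u ih =>
    intro hu
    rw [red]
    split
    · next h =>
      have h2 : 1 ≤ u / m := (Nat.one_le_div_iff (by omega)).2 h.2
      exact ih _ (step_lt h.1 h.2) (by omega)
    · next h => exact hu

lemma step_modeq {m u : ℕ} (hm : 2 ≤ m) (hmu : m ≤ u) : u % m + u / m ≡ u [MOD m - 1] := by
  have hle : u % m + u / m ≤ u := (step_lt hm hmu).le
  rw [Nat.modEq_iff_dvd' hle]
  refine ⟨u / m, ?_⟩
  have h1 : m * (u / m) + u % m = u := Nat.div_add_mod u m
  have h2 : u / m ≤ m * (u / m) := Nat.le_mul_of_pos_left _ (by omega)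
  rw [Nat.sub_mul, one_mul]
  generalize hT : m * (u / m) = T at h1 h2
  omega

lemma red_modeq {m : ℕ} (hm : 2 ≤ m) : ∀ u, red m u ≡ u [MOD m - 1] := by
  intro u
  induction u using Nat.strong_induction_on with
  | _ u ih =>
    rw [red]
    split
    · next h => exact (ih _ (step_lt h.1 h.2)).trans (step_modeq h.1 h.2)
    · next h => rfl

lemma sp_red_le {b r : ℕ} (hb : 1 < b) (hr : 1 ≤ r) : ∀ u, sp b (red (b ^ r) u) ≤ sp b u := by
  intro u
  induction u using Nat.strong_induction_on with
  | _ u ih =>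
    have hm : 2 ≤ b ^ r := by
      calc 2 ≤ b := hb
      _ = b ^ 1 := (pow_one b).symm
      _ ≤ b ^ r := Nat.pow_le_pow_right (by omega) hr
    rw [red]
    split
    · next h =>
      refine le_trans (ih _ (step_lt h.1 h.2)) ?_
      calc sp b (u % b ^ r + u / b ^ r) ≤ sp b (u % b ^ r) + sp b (u / b ^ r) := sp_add_le hb _ _
      _ = sp b u := sp_split_s4 hb r u
    · next h => exact le_rfl

/-- If nonnegative integers `(u_d)_{d∈D}` satisfy `Σ u_d·d ≡ 0 mod (p^r − 1)`
coordinatewise with all coordinates of the sum positive, then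
`Σ_d s_p(u_d) ≥ s_{D,p}(r)`. -/
theorem sDp_le_spU_of_congruent (p : ℕ) (hp : p.Prime) {ι : Type} [Fintype ι] [Nonempty ι]
    (D : Finset (ι → ℕ)) (hD : D.Nonempty)
    (hcoord : ∀ k : ι, ∃ d ∈ D, 0 < d k)
    (r : ℕ) (hr : 1 ≤ r) (U : D → ℕ)
    (h : ∀ k, (p ^ r - 1) ∣ sigmaSum D U k ∧ 0 < sigmaSum D U k) :
    sDp p D r ≤ spU p D U := by
  have hb : 1 < p := hp.one_lt
  have hm : 2 ≤ p ^ r := by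
    calc 2 ≤ p := hp.two_le
    _ = p ^ 1 := (pow_one p).symm
    _ ≤ p ^ r := Nat.pow_le_pow_right (by omega) hr
  set U' : D → ℕ := fun d => red (p ^ r) (U d) with hU'
  have hmem : memE p D r U' := by
    refine ⟨fun d => ?_, fun k => ?_⟩
    · have := red_lt hm (U d)
      simp only [hU']
      omega
    · have hmodeq : sigmaSum D U' k ≡ sigmaSum D U k [MOD p ^ r - 1] := by
        unfold Nat.ModEq sigmaSum
        conv_lhs => rw [Finset.sum_nat_mod]
        conv_rhs => rw [Finset.sum_nat_mod]
        congr 1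
        exact Finset.sum_congr rfl fun d _ => (red_modeq hm (U d)).mul_right _
      have hdvd : (p ^ r - 1) ∣ sigmaSum D U' k :=
        Nat.modEq_zero_iff_dvd.1 (hmodeq.trans (Nat.modEq_zero_iff_dvd.2 (h k).1))
      refine ⟨hdvd, ?_⟩
      have hpos := (h k).2
      have hex : ∃ d : D, 0 < U d * (d : ι → ℕ) k := by
        by_contra hcon
        push_neg at hcon
        have hz : sigmaSum D U k = 0 :=
          Finset.sum_eq_zero fun d _ => by have := hcon d; omega
        omega
      obtain ⟨d, hd⟩ := hex
      have hUd : 0 < U d := by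
        rcases Nat.eq_zero_or_pos (U d) with h0 | h0
        · rw [h0] at hd; simp at hd
        · exact h0
      have hdk : 0 < (d : ι → ℕ) k := by
        rcases Nat.eq_zero_or_pos ((d : ι → ℕ) k) with h0 | h0
        · rw [h0] at hd; simp at hd
        · exact h0
      have hterm : 0 < U' d * (d : ι → ℕ) k :=
        Nat.mul_pos (red_pos hm (U d) hUd) hdk
      calc 0 < U' d * (d : ι → ℕ) k := hterm
      _ ≤ sigmaSum D U' k :=
        Finset.single_le_sum (f := fun d : D => U' d * (d : ι → ℕ) k)
          (fun i _ => Nat.zero_le _) (Finset.mem_univ d)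
  have h1 : sDp p D r ≤ spU p D U' := Nat.sInf_le ⟨U', hmem, rfl⟩
  have h2 : spU p D U' ≤ spU p D U :=
    Finset.sum_le_sum fun d _ => sp_red_le hb hr (U d)
  exact le_trans h1 h2
end

section
/- Let I ⊆ {1,…,n} with #I = k, and suppose that D_I, viewed as a subset of ℕ^I, is nonempty and not contained in any coordinate hyperplane of ℕ^I. Then δ_p(D) ≤ δ_p(D_I) + n − k. -/
open scoped BigOperators
open scoped Classical

variable {ι : Type} [Fintype ι]

set_option linter.unusedSectionVars false

lemma sp_pow_sub_one (p : ℕ) (hp : 2 ≤ p) (r : ℕ) : sp p (p ^ r - 1) = r * (p - 1) := by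
  induction r with
  | zero => simp [sp]
  | succ n ih =>
    have hpn : 1 ≤ p ^ n := Nat.one_le_pow _ _ (by omega)
    have hpp : p ≤ p ^ n * p := Nat.le_mul_of_pos_left p hpn
    have h1 : p ^ (n+1) - 1 = (p - 1) + (p ^ n - 1) * p := by
      rw [pow_succ, Nat.sub_mul]; omega
    have hpos : 0 < (p - 1) + (p ^ n - 1) * p := by omega
    rw [h1]
    unfold sp
    rw [Nat.digits_def' (by omega : 1 < p) hpos]
    have hmod : ((p - 1) + (p ^ n - 1) * p) % p = p - 1 := by
      rw [Nat.add_mul_mod_self_right, Nat.mod_eq_of_lt (by omega)]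
    have hdiv : ((p - 1) + (p ^ n - 1) * p) / p = p ^ n - 1 := by
      rw [Nat.add_mul_div_right _ _ (by omega : 0 < p), Nat.div_eq_of_lt (by omega)]
      omega
    rw [hmod, hdiv, List.sum_cons]
    unfold sp at ih
    rw [ih]; ring

/-- E is nonempty for a set satisfying the hyperplane condition. -/
lemma E_nonempty (p : ℕ) (hp : 2 ≤ p) (D : Finset (ι → ℕ))
    (hcoord : ∀ k : ι, ∃ d ∈ D, 0 < d k) (r : ℕ) (hr : 1 ≤ r) :
    memE p D r (fun _ => p ^ r - 1) := by
  have hpr : 2 ≤ p ^ r := by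
    calc 2 ≤ p := hp
    _ = p ^ 1 := (pow_one p).symm
    _ ≤ p ^ r := Nat.pow_le_pow_right (by omega) hr
  constructor
  · intro d; exact le_rfl
  · intro k
    have hsum : sigmaSum D (fun _ => p ^ r - 1) k = (p ^ r - 1) * ∑ d : D, (d : ι → ℕ) k := by
      unfold sigmaSum; rw [Finset.mul_sum]
    constructor
    · rw [hsum]; exact Dvd.intro _ rfl
    · rw [hsum]
      obtain ⟨d, hd, hdk⟩ := hcoord k
      have : 0 < ∑ e : D, (e : ι → ℕ) k := by
        refine lt_of_lt_of_le hdk ?_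
        exact Finset.single_le_sum (f := fun e : D => (e : ι → ℕ) k)
          (fun _ _ => Nat.zero_le _) (Finset.mem_univ (⟨d, hd⟩ : D))
      exact Nat.mul_pos (by omega) this

lemma key_nat (p : ℕ) (hp : 2 ≤ p) (D : Finset (ι → ℕ))
    (hcoord : ∀ k : ι, ∃ d ∈ D, 0 < d k)
    (I : Finset ι) (DI : Finset (↥I → ℕ))
    (hDI : DI = (D.filter (fun d => ∀ j ∉ I, d j = 0)).image (fun d (j : ↥I) => d j))
    (hDIcoord : ∀ k : ↥I, ∃ d ∈ DI, 0 < d k)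
    (r : ℕ) (hr : 1 ≤ r) :
    sDp p D r ≤ sDp p DI r + (Fintype.card ι - I.card) * (r * (p - 1)) := by
  have hpr : 2 ≤ p ^ r := by
    calc 2 ≤ p := hp
    _ = p ^ 1 := (pow_one p).symm
    _ ≤ p ^ r := Nat.pow_le_pow_right (by omega) hr
  -- obtain minimal U' for DI
  have hne : {s | ∃ U : DI → ℕ, memE p DI r U ∧ spU p DI U = s}.Nonempty :=
    ⟨_, fun _ => p ^ r - 1, E_nonempty p hp DI hDIcoord r hr, rfl⟩
  obtain ⟨U', hU'E, hU's⟩ := Nat.sInf_mem hne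
  -- representatives
  have hrep : ∀ e : ↥DI, ∃ d : ↥D, (∀ j ∉ I, (d : ι → ℕ) j = 0) ∧
      (fun j : ↥I => (d : ι → ℕ) (j : ι)) = (e : ↥I → ℕ) := by
    intro e
    have he : (e : ↥I → ℕ) ∈ (D.filter (fun d => ∀ j ∉ I, d j = 0)).image
        (fun d (j : ↥I) => d j) := by rw [← hDI]; exact e.2
    simp only [Finset.mem_image, Finset.mem_filter] at he
    obtain ⟨d, ⟨hdD, hd0⟩, hde⟩ := he
    exact ⟨⟨d, hdD⟩, hd0, hde⟩
  choose h hh0 hhres using hrep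
  have hinj : Function.Injective h := by
    intro e e' hee
    apply Subtype.ext
    rw [← hhres e, ← hhres e', hee]
  -- boosters
  choose b hbD hbpos using hcoord
  set B : Finset ↥D := (Finset.univ.filter fun k : ι => k ∉ I).image (fun k => ⟨b k, hbD k⟩)
    with hB
  have hBnotrep : ∀ d ∈ B, ¬ ∃ e, h e = d := by
    intro d hd ⟨e, he⟩
    rw [hB, Finset.mem_image] at hd
    obtain ⟨k, hk, hkd⟩ := hd
    simp only [Finset.mem_filter] at hk
    have h1 : (d : ι → ℕ) k = 0 := by rw [← he]; exact hh0 e k hk.2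
    have h2 : 0 < (d : ι → ℕ) k := by rw [← hkd]; exact hbpos k
    omega
  -- define U
  set U : ↥D → ℕ := fun d =>
    if hd : ∃ e, h e = d then U' hd.choose else if d ∈ B then p ^ r - 1 else 0 with hU
  have hUh : ∀ e, U (h e) = U' e := by
    intro e
    have hex : ∃ e', h e' = h e := ⟨e, rfl⟩
    rw [hU]
    simp only [dif_pos hex]
    congr 1
    exact hinj hex.choose_spec
  have hUB : ∀ d ∈ B, U d = p ^ r - 1 := by
    intro d hd
    rw [hU]; simp only [dif_neg (hBnotrep d hd), if_pos hd]
  have hU0 : ∀ d, d ∉ B → (¬ ∃ e, h e = d) → U d = 0 := by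
    intro d hd hd'
    rw [hU]; simp only [dif_neg hd', if_neg hd]
  have hUbound : ∀ d, U d ≤ p ^ r - 1 := by
    intro d
    by_cases hex : ∃ e, h e = d
    · obtain ⟨e, rfl⟩ := hex
      rw [hUh]; exact hU'E.1 _
    · by_cases hdB : d ∈ B
      · rw [hUB d hdB]
      · rw [hU0 d hdB hex]; omega
  -- sum decomposition
  have himg : Finset.univ.filter (fun d : ↥D => ∃ e, h e = d) = Finset.univ.image h := by
    ext d
    simp [eq_comm]
  have hBsub : B ⊆ Finset.univ.filter (fun d : ↥D => ¬ ∃ e, h e = d) := by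
    intro d hd
    simp only [Finset.mem_filter]
    exact ⟨Finset.mem_univ d, hBnotrep d hd⟩
  have hsplit : ∀ f : ↥D → ℕ,
      ∑ d, f d = (∑ e : ↥DI, f (h e)) +
        ∑ d ∈ Finset.univ.filter (fun d : ↥D => ¬ ∃ e, h e = d), f d := by
    intro f
    rw [← Finset.sum_filter_add_sum_filter_not Finset.univ (fun d : ↥D => ∃ e, h e = d) f]
    congr 1
    rw [himg, Finset.sum_image (fun x _ y _ hxy => hinj hxy)]
  -- sigmaSum formula
  have hsig : ∀ k, sigmaSum D U k =
      (∑ e : ↥DI, U' e * (h e : ι → ℕ) k) + ∑ d ∈ B, (p ^ r - 1) * (d : ι → ℕ) k := by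
    intro k
    unfold sigmaSum
    rw [hsplit (fun d => U d * (d : ι → ℕ) k)]
    congr 1
    · exact Finset.sum_congr rfl (fun e _ => by rw [hUh])
    · rw [← Finset.sum_subset hBsub (fun d hd hdB => ?_)]
      · exact Finset.sum_congr rfl (fun d hd => by rw [hUB d hd])
      · simp only [Finset.mem_filter] at hd
        rw [hU0 d hdB hd.2, zero_mul]
  have hUmem : memE p D r U := by
    refine ⟨hUbound, fun k => ?_⟩
    rw [hsig k]
    have hdvd2 : (p ^ r - 1) ∣ ∑ d ∈ B, (p ^ r - 1) * (d : ι → ℕ) k :=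
      Finset.dvd_sum (fun d _ => Dvd.intro _ rfl)
    by_cases hk : k ∈ I
    · have hfirst : (∑ e : ↥DI, U' e * (h e : ι → ℕ) k) = sigmaSum DI U' ⟨k, hk⟩ := by
        unfold sigmaSum
        refine Finset.sum_congr rfl (fun e _ => ?_)
        congr 1
        exact (congrFun (hhres e) ⟨k, hk⟩)
      rw [hfirst]
      obtain ⟨hdvd1, hpos1⟩ := hU'E.2 ⟨k, hk⟩
      exact ⟨dvd_add hdvd1 hdvd2, lt_of_lt_of_le hpos1 (Nat.le_add_right _ _)⟩
    · have hfirst : (∑ e : ↥DI, U' e * (h e : ι → ℕ) k) = 0 := by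
        refine Finset.sum_eq_zero (fun e _ => ?_)
        rw [hh0 e k hk, mul_zero]
      rw [hfirst, zero_add]
      refine ⟨hdvd2, ?_⟩
      have hmem : (⟨b k, hbD k⟩ : ↥D) ∈ B := by
        rw [hB]
        exact Finset.mem_image_of_mem _ (by simp [hk])
      calc 0 < (p ^ r - 1) * (b k) k := Nat.mul_pos (by omega) (hbpos k)
      _ ≤ _ := Finset.single_le_sum (f := fun d : ↥D => (p ^ r - 1) * (d : ι → ℕ) k)
          (fun _ _ => Nat.zero_le _) hmem
  -- weight
  have hw : spU p D U ≤ spU p DI U' + (Fintype.card ι - I.card) * (r * (p - 1)) := by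
    unfold spU
    rw [hsplit (fun d => sp p (U d))]
    have h1 : (∑ e : ↥DI, sp p (U (h e))) = ∑ e : ↥DI, sp p (U' e) :=
      Finset.sum_congr rfl (fun e _ => by rw [hUh])
    rw [h1]
    refine Nat.add_le_add_left ?_ _
    have h2 : ∑ d ∈ Finset.univ.filter (fun d : ↥D => ¬ ∃ e, h e = d), sp p (U d)
        = ∑ d ∈ B, sp p (p ^ r - 1) := by
      rw [← Finset.sum_subset hBsub (fun d hd hdB => ?_)]
      · exact Finset.sum_congr rfl (fun d hd => by rw [hUB d hd])
      · simp only [Finset.mem_filter] at hd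
        rw [hU0 d hdB hd.2]; simp [sp]
    rw [h2, Finset.sum_const, smul_eq_mul, sp_pow_sub_one p hp r]
    refine Nat.mul_le_mul_right _ ?_
    calc B.card ≤ (Finset.univ.filter fun k : ι => k ∉ I).card := Finset.card_image_le
    _ = Iᶜ.card := by congr 1; ext k; simp
    _ = Fintype.card ι - I.card := Finset.card_compl I
  calc sDp p D r ≤ spU p D U := Nat.sInf_le ⟨U, hUmem, rfl⟩
  _ ≤ spU p DI U' + (Fintype.card ι - I.card) * (r * (p - 1)) := hw
  _ = sDp p DI r + (Fintype.card ι - I.card) * (r * (p - 1)) := by rw [hU's]; rfl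

/-- For `I ⊆ {1,…,n}` with `#I = k` and `D_I` nonempty and not contained in any
coordinate hyperplane of `ℕ^I`, one has `δ_p(D) ≤ δ_p(D_I) + n − k`. -/
theorem density_le_density_restrict (p : ℕ) (hp : p.Prime) {ι : Type} [Fintype ι] [Nonempty ι]
    (D : Finset (ι → ℕ)) (hD : D.Nonempty)
    (hcoord : ∀ k : ι, ∃ d ∈ D, 0 < d k)
    (I : Finset ι) (DI : Finset (↥I → ℕ))
    (hDI : DI = (D.filter (fun d => ∀ j ∉ I, d j = 0)).image (fun d (j : ↥I) => d j))
    (hDIne : DI.Nonempty)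
    (hDIcoord : ∀ k : ↥I, ∃ d ∈ DI, 0 < d k) :
    density p D ≤ density p DI + ((Fintype.card ι : ℝ) - (I.card : ℝ)) := by
  have hp2 : 2 ≤ p := hp.two_le
  set cc : ℝ := (Fintype.card ι : ℝ) - (I.card : ℝ) with hcc
  have hccnn : 0 ≤ cc := by
    rw [hcc, sub_nonneg]
    exact_mod_cast Finset.card_le_univ I
  have hp1 : (0:ℝ) < (p:ℝ) - 1 := by
    have : (2:ℝ) ≤ (p:ℝ) := by exact_mod_cast hp2
    linarith
  unfold density
  set SD := {x : ℝ | ∃ r : ℕ, 1 ≤ r ∧ x = (sDp p D r : ℝ) / (r : ℝ)} with hSD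
  set SI := {x : ℝ | ∃ r : ℕ, 1 ≤ r ∧ x = (sDp p DI r : ℝ) / (r : ℝ)} with hSI
  have hSIne : SI.Nonempty := ⟨(sDp p DI 1 : ℝ) / ((1:ℕ):ℝ), 1, le_rfl, rfl⟩
  have hSDbdd : BddBelow SD := by
    refine ⟨0, fun x hx => ?_⟩
    obtain ⟨r, hr, rfl⟩ := hx
    positivity
  have hkey : ∀ y ∈ SI, sInf SD ≤ y + cc * ((p:ℝ) - 1) := by
    rintro y ⟨r, hr, rfl⟩
    have h1 : sInf SD ≤ (sDp p D r : ℝ) / r := csInf_le hSDbdd ⟨r, hr, rfl⟩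
    have hnat := key_nat p hp2 D hcoord I DI hDI hDIcoord r hr
    have hcast : (sDp p D r : ℝ) ≤ (sDp p DI r : ℝ) + cc * ((r:ℝ) * ((p:ℝ) - 1)) := by
      have := (Nat.cast_le (α := ℝ)).mpr hnat
      push_cast [Nat.cast_sub (Finset.card_le_univ I), Nat.cast_sub (show 1 ≤ p by omega)]
        at this
      rw [hcc]
      linarith
    have hr0 : (0:ℝ) < (r:ℝ) := by exact_mod_cast hr
    have h2 : (sDp p D r : ℝ) / r ≤ ((sDp p DI r : ℝ) + cc * ((r:ℝ) * ((p:ℝ) - 1))) / r := by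
      gcongr
    have h3 : ((sDp p DI r : ℝ) + cc * ((r:ℝ) * ((p:ℝ) - 1))) / r
        = (sDp p DI r : ℝ) / r + cc * ((p:ℝ) - 1) := by
      field_simp
    linarith
  have h2 : sInf SD - cc * ((p:ℝ) - 1) ≤ sInf SI :=
    le_csInf hSIne (fun y hy => by linarith [hkey y hy])
  have h3 : sInf SD ≤ sInf SI + cc * ((p:ℝ) - 1) := by linarith
  calc (1 / ((p:ℝ) - 1)) * sInf SD
      ≤ (1 / ((p:ℝ) - 1)) * (sInf SI + cc * ((p:ℝ) - 1)) := by
        apply mul_le_mul_of_nonneg_left h3 (by positivity)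
    _ = (1 / ((p:ℝ) - 1)) * sInf SI + cc := by
        field_simp
end

section
/- The sets MI_{D,p}(r) are pairwise disjoint: if r, r' ≥ 1 and a tuple U = (u_d)_{d∈D} of nonnegative integers belongs to both MI_{D,p}(r) and MI_{D,p}(r'), then r = r'. -/
open scoped BigOperators
open scoped Classical

variable {ι : Type} [Fintype ι]

lemma sp_pos_of_pos {p u : ℕ} (hu : 0 < u) : 0 < sp p u := by
  have hne : Nat.digits p u ≠ [] := Nat.digits_ne_nil_iff_ne_zero.mpr hu.ne'
  have hmem : (Nat.digits p u).getLast hne ∈ Nat.digits p u := List.getLast_mem hne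
  have hlast := Nat.getLast_digit_ne_zero p hu.ne'
  have := List.single_le_sum (fun x _ => Nat.zero_le x) _ hmem
  unfold sp; omega

/-- The sets `MI_{D,p}(r)` are pairwise disjoint: a tuple `U` belongs to both
`MI_{D,p}(r)` and `MI_{D,p}(r')` only if `r = r'`. -/
theorem memMI_disjoint (p : ℕ) (hp : p.Prime) {ι : Type} [Fintype ι] [Nonempty ι]
    (D : Finset (ι → ℕ)) (hD : D.Nonempty)
    (hcoord : ∀ k : ι, ∃ d ∈ D, 0 < d k)
    (r r' : ℕ) (hr : 1 ≤ r) (hr' : 1 ≤ r') (U : D → ℕ)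
    (h : memMI p D r U) (h' : memMI p D r' U) :
    r = r' := by
  obtain ⟨⟨hE, hmin⟩, -⟩ := h
  obtain ⟨⟨hE', hmin'⟩, -⟩ := h'
  obtain ⟨k⟩ := ‹Nonempty ι›
  have hpos := (hE.2 k).2
  have hex : ∃ d : D, 0 < U d := by
    by_contra hc
    push_neg at hc
    have : sigmaSum D U k = 0 := Finset.sum_eq_zero (fun d _ => by
      rw [Nat.le_zero.mp (hc d), zero_mul])
    omega
  obtain ⟨d, hd⟩ := hex
  have hsp : 0 < spU p D U := by
    have h1 : 0 < sp p (U d) := sp_pos_of_pos hd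
    have h2 : sp p (U d) ≤ spU p D U :=
      Finset.single_le_sum (f := fun d => sp p (U d)) (fun _ _ => Nat.zero_le _)
        (Finset.mem_univ d)
    omega
  have hne : (spU p D U : ℝ) ≠ 0 := Nat.cast_ne_zero.mpr hsp.ne'
  have hnz : ((p : ℝ) - 1) * (r : ℝ) * density p D ≠ 0 := hmin ▸ hne
  have key : ((p : ℝ) - 1) * (r : ℝ) * density p D
      = ((p : ℝ) - 1) * (r' : ℝ) * density p D := by rw [← hmin, ← hmin']
  have hδ : density p D ≠ 0 := fun h0 => hnz (by rw [h0, mul_zero])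
  have hp1 : ((p : ℝ) - 1) ≠ 0 := fun h0 => hnz (by rw [h0]; ring)
  have : (r : ℝ) = (r' : ℝ) := by
    have := mul_right_cancel₀ hδ key
    exact mul_left_cancel₀ hp1 this
  exact_mod_cast this
end

section
/- There exists R ≥ 1 such that MI_{D,p}(r) = ∅ for every r ≥ R. -/
open scoped BigOperators
open scoped Classical

variable {ι : Type} [Fintype ι]

/-- The set `MI_{D,p}(r)` is empty for all sufficiently large `r`. -/
theorem memMI_eventually_empty (p : ℕ) (hp : p.Prime) {ι : Type} [Fintype ι] [Nonempty ι]
    (D : Finset (ι → ℕ)) (hD : D.Nonempty)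
    (hcoord : ∀ k : ι, ∃ d ∈ D, 0 < d k) :
    ∃ R : ℕ, 1 ≤ R ∧ ∀ r : ℕ, R ≤ r → ∀ U : D → ℕ, ¬ memMI p D r U := by

  classical
  have hp2 : 2 ≤ p := hp.two_le
  set S : ι → ℕ := fun k => ∑ d ∈ D, (d : ι → ℕ) k with hS
  set B : Finset (ι → ℕ) := Fintype.piFinset (fun k => Finset.range (S k + 1)) with hB
  refine ⟨B.card + 1, le_add_self, ?_⟩
  intro r hr U hU
  have hr1 : 1 ≤ r := le_trans le_add_self hr
  have hpr : 0 < p ^ r - 1 := by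
    have : 2 ≤ p ^ r := le_trans hp2 (Nat.le_self_pow (by omega) p)
    omega
  -- every iterate of the shift is bounded by p^r - 1
  have hbound : ∀ m : ℕ, ∀ d : D, ((shiftE p D r)^[m] U) d ≤ p ^ r - 1 := by
    intro m
    induction m with
    | zero => intro d; exact hU.1.1.1 d
    | succ n ih =>
      intro d
      rw [Function.iterate_succ_apply']
      show shiftFun p r (((shiftE p D r)^[n] U) d) ≤ p ^ r - 1
      unfold shiftFun
      split
      · omega
      · exact le_of_lt (Nat.mod_lt _ hpr)
  -- suppMap values lie in B
  have hmem : ∀ k : ZMod r, suppMap p D r U k ∈ B := by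
    intro k
    rw [hB, Fintype.mem_piFinset]
    intro j
    rw [Finset.mem_range]
    have : sigmaSum D ((shiftE p D r)^[k.val] U) j ≤ (p ^ r - 1) * S j := by
      rw [hS]
      unfold sigmaSum
      rw [Finset.mul_sum, ← Finset.sum_attach D (fun d => (p ^ r - 1) * d j)]
      apply Finset.sum_le_sum
      intro d _
      exact Nat.mul_le_mul_right _ (hbound k.val d)
    have h2 : suppMap p D r U k j ≤ ((p ^ r - 1) * S j) / (p ^ r - 1) :=
      Nat.div_le_div_right this
    rw [Nat.mul_div_cancel_left _ hpr] at h2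
    omega
  haveI : NeZero r := ⟨by omega⟩
  have hinj : Function.Injective (fun k : ZMod r => (⟨suppMap p D r U k, hmem k⟩ : B)) := by
    intro a b hab
    exact hU.2 (congrArg Subtype.val hab)
  have hcard := Fintype.card_le_of_injective _ hinj
  rw [ZMod.card, Fintype.card_coe] at hcard
  omega
end

section
/- Let U = (u_d) ∈ E_{D,p}(r) and U' = (u'_d) ∈ E_{D,p}(r') be two minimal solutions with φ_U(0) = φ_{U'}(0). Define V = (v_d)_{d∈D} by v_d := p^r·u'_d + u_d. Then V is a minimal element of E_{D,p}(r + r'), and its support satisfies φ_V(i) = φ_{U'}(i) for 0 ≤ i ≤ r' and φ_V(i + r') = φ_U(i) for 1 ≤ i ≤ r − 1 (indices taken in ℤ/(r+r')ℤ). -/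
/-!
On `[0, p^s)` the shift `δ_s` rotates the `s` base-`p` digits, so
`δ_s^i w = p^i w - (p^s - 1) ⌊w / p^(s-i)⌋` for `i ≤ s`; summing over `D`,
`φ_s(δ_s^i W) = p^i φ_s(W) - Σ_d ⌊w_d / p^(s-i)⌋ d`.
The glued tuple `V` carries the digits of `U'` above those of `U`, so its `p`-weight is
`s_p(U) + s_p(U')`, and `Σ_d v_d d = (p^(r+r') - 1) e` with `e = φ_U(0) = φ_{U'}(0)`;
hence `V` is minimal. After `i ≤ r'` rotations the leading digits of `V` are those of `U'`;
after `i + r'` rotations they are all of `U'` followed by the leading `i` digits of `U`.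
-/

open scoped BigOperators
open scoped Classical

variable {ι : Type} [Fintype ι]

section Shift

variable {p s : ℕ}

lemma shiftFun_iterate_self (p s i : ℕ) : (shiftFun p s)^[i] (p ^ s - 1) = p ^ s - 1 :=
  Function.iterate_fixed (if_pos rfl : shiftFun p s (p ^ s - 1) = p ^ s - 1) i

lemma shiftFun_iterate_of_lt {w : ℕ} (hw : w < p ^ s - 1) (i : ℕ) :
    (shiftFun p s)^[i] w = p ^ i * w % (p ^ s - 1) := by
  induction i with
  | zero => simp [Nat.mod_eq_of_lt hw]
  | succ i ih =>
    have hlt : p ^ i * w % (p ^ s - 1) < p ^ s - 1 := Nat.mod_lt _ (by omega)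
    rw [Function.iterate_succ_apply', ih, shiftFun, if_neg hlt.ne, Nat.mul_mod_mod, pow_succ,
      mul_comm (p ^ i) p, mul_assoc]

lemma coprime_pow_pow_sub_one (hp : 0 < p) {i : ℕ} (hi : i ≤ s) :
    Nat.Coprime (p ^ i) (p ^ s - 1) :=
  ((Nat.coprime_self_sub_right (Nat.one_le_pow _ _ hp)).2
    (Nat.coprime_one_right _)).coprime_dvd_left (pow_dvd_pow p hi)

lemma shiftFun_iterate_add_mul_div (hp : 0 < p) {w i : ℕ} (hw : w < p ^ s) (hi : i ≤ s) :
    (shiftFun p s)^[i] w + (p ^ s - 1) * (w / p ^ (s - i)) = p ^ i * w := by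
  set M := p ^ (s - i)
  have hpow : p ^ i * M = p ^ s := by rw [← pow_add, Nat.add_sub_cancel' hi]
  have hM : 0 < M := by positivity
  have hpi : 0 < p ^ i := by positivity
  have hw_eq := Nat.div_add_mod w M
  have hx : (p ^ s - 1) * (w / M) + (p ^ i * (w % M) + w / M) = p ^ i * w := by
    have h1 : p ^ i * w = p ^ s * (w / M) + p ^ i * (w % M) := by
      rw [← hpow]; conv_lhs => rw [← hw_eq]
      ring
    have h2 : (p ^ s - 1) * (w / M) + w / M = p ^ s * (w / M) := by
      rw [← Nat.succ_mul, Nat.succ_eq_add_one, Nat.sub_add_cancel (by omega)]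
    omega
  have hx_lt : p ^ i * (w % M) + w / M < p ^ s := by
    have h1 : w / M < p ^ i := Nat.div_lt_of_lt_mul (by rwa [mul_comm, hpow])
    calc p ^ i * (w % M) + w / M < p ^ i * (w % M + 1) := by rw [mul_add_one]; omega
      _ ≤ p ^ i * M := Nat.mul_le_mul_left _ (Nat.mod_lt _ hM)
      _ = p ^ s := hpow
  suffices (shiftFun p s)^[i] w = p ^ i * (w % M) + w / M by omega
  rcases (Nat.le_sub_one_of_lt hw).lt_or_eq with hw | hmax
  · rw [shiftFun_iterate_of_lt hw, ← hx, Nat.mul_add_mod, Nat.mod_eq_of_lt]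
    refine lt_of_le_of_ne (by omega) fun hxN => ?_
    -- if the rotation were `p^s - 1`, then `p^s - 1 ∣ p^i w`, forcing `w = 0`
    have : p ^ s - 1 ∣ w := (coprime_pow_pow_sub_one hp hi).symm.dvd_of_dvd_mul_left
      ⟨w / M + 1, by rw [← hx, hxN]; ring⟩
    obtain rfl := Nat.eq_zero_of_dvd_of_lt this hw
    simp only [Nat.zero_mod, Nat.zero_div, mul_zero, add_zero] at hxN
    omega
  · have hfix : (shiftFun p s)^[i] w = w := hmax ▸ shiftFun_iterate_self p s i
    rw [hfix]
    rcases Nat.eq_zero_or_pos (p ^ i * (w % M) + w / M) with h0 | hpos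
    · obtain ⟨hmod, hdiv⟩ := Nat.add_eq_zero_iff.mp h0
      rw [h0, ← hw_eq, hdiv, (Nat.mul_eq_zero.mp hmod).resolve_left hpi.ne']
      simp
    · have hdvd : p ^ s - 1 ∣ p ^ i * (w % M) + w / M :=
        (Nat.dvd_add_right (dvd_mul_right _ _)).mp (by rw [hx, hmax]; exact dvd_mul_left _ _)
      have := Nat.le_of_dvd hpos hdvd
      omega

end Shift

section Support

variable {ι : Type} {p s : ℕ} {D : Finset (ι → ℕ)} {W : D → ℕ}

lemma memE.lt_pow (hp : 0 < p) (hW : memE p D s W) (d : D) : W d < p ^ s :=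
  (hW.1 d).trans_lt (Nat.sub_lt (by positivity) one_pos)

lemma memE.sigmaSum_eq_mul_phiMap (hW : memE p D s W) (k : ι) :
    sigmaSum D W k = (p ^ s - 1) * phiMap p D s W k :=
  (Nat.mul_div_cancel' (hW.2 k).1).symm

lemma shiftE_iterate_apply (i : ℕ) (W : D → ℕ) (d : D) :
    (shiftE p D s)^[i] W d = (shiftFun p s)^[i] (W d) := by
  induction i generalizing W with
  | zero => rfl
  | succ i ih => rw [Function.iterate_succ_apply, ih]; rfl

lemma isPeriodicPt_shiftE (hp : 0 < p) (hW : ∀ d, W d < p ^ s) :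
    Function.IsPeriodicPt (shiftE p D s) s W := by
  funext d
  have h := shiftFun_iterate_add_mul_div hp (hW d) le_rfl
  rw [Nat.sub_self, pow_zero, Nat.div_one] at h
  have h' : (p ^ s - 1) * W d + W d = p ^ s * W d := by
    rw [← Nat.succ_mul, Nat.succ_eq_add_one, Nat.sub_add_cancel (Nat.one_le_pow _ _ hp)]
  rw [shiftE_iterate_apply]
  omega

lemma sigmaSum_shiftE_iterate_add (hp : 0 < p) (hW : ∀ d, W d < p ^ s) {i : ℕ} (hi : i ≤ s)
    (k : ι) :
    sigmaSum D ((shiftE p D s)^[i] W) k + (p ^ s - 1) * sigmaSum D (fun d => W d / p ^ (s - i)) k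
      = p ^ i * sigmaSum D W k := by
  simp only [sigmaSum, shiftE_iterate_apply, Finset.mul_sum, ← Finset.sum_add_distrib]
  refine Finset.sum_congr rfl fun d _ => ?_
  rw [← mul_assoc, ← mul_assoc, ← add_mul, shiftFun_iterate_add_mul_div hp (hW d) hi]

lemma phiMap_shiftE_iterate_add (hp : 1 < p) (hs : 0 < s) (hW : memE p D s W) {i : ℕ}
    (hi : i ≤ s) (k : ι) :
    phiMap p D s ((shiftE p D s)^[i] W) k + sigmaSum D (fun d => W d / p ^ (s - i)) k
      = p ^ i * phiMap p D s W k := by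
  have hN : 0 < p ^ s - 1 := Nat.sub_pos_of_lt (Nat.one_lt_pow hs.ne' hp)
  have h := sigmaSum_shiftE_iterate_add (by omega) (hW.lt_pow (by omega)) hi k
  rw [hW.sigmaSum_eq_mul_phiMap k, mul_left_comm] at h
  rw [phiMap, ← Nat.add_mul_div_left _ _ hN, h, Nat.mul_div_cancel_left _ hN]

lemma suppMap_zero : suppMap p D s W 0 = phiMap p D s W := by
  rw [suppMap, ZMod.val_zero]
  rfl

lemma suppMap_natCast (hp : 0 < p) (hW : ∀ d, W d < p ^ s) (i : ℕ) :
    suppMap p D s W i = phiMap p D s ((shiftE p D s)^[i] W) := by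
  rw [suppMap, ZMod.val_natCast, (isPeriodicPt_shiftE hp hW).iterate_mod_apply]

end Support

lemma sp_pow_mul_add {p : ℕ} (hp : 1 < p) {r a : ℕ} (b : ℕ) (ha : a < p ^ r) :
    sp p (p ^ r * b + a) = sp p a + sp p b := by
  rcases Nat.eq_zero_or_pos b with rfl | hb
  · simp [sp]
  have h := Nat.digits_append_zeroes_append_digits (n := a) (k := r - (p.digits a).length) hp hb
  rw [Nat.add_sub_cancel' ((Nat.digits_length_le_iff hp a).2 ha), add_comm] at h
  simp [sp, ← h]

section Glue

variable {ι : Type} {p r r' : ℕ} {D : Finset (ι → ℕ)} {U U' : D → ℕ}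

def glue (p r : ℕ) (U U' : D → ℕ) : D → ℕ := fun d => p ^ r * U' d + U d

lemma spU_glue (hp : 1 < p) (hU : ∀ d, U d < p ^ r) :
    spU p D (glue p r U U') = spU p D U + spU p D U' := by
  simp only [spU, glue, sp_pow_mul_add hp _ (hU _), Finset.sum_add_distrib]

lemma sigmaSum_glue (k : ι) :
    sigmaSum D (glue p r U U') k = p ^ r * sigmaSum D U' k + sigmaSum D U k := by
  simp only [sigmaSum, glue, add_mul, Finset.sum_add_distrib, Finset.mul_sum, mul_assoc]

lemma glue_div_pow_add (hU : ∀ d, U d < p ^ r) (j : ℕ) :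
    (fun d => glue p r U U' d / p ^ (r + j)) = fun d => U' d / p ^ j := by
  funext d
  have hpr : 0 < p ^ r := (Nat.zero_le _).trans_lt (hU d)
  rw [glue, pow_add, ← Nat.div_div_eq_div_mul, Nat.mul_add_div hpr, Nat.div_eq_of_lt (hU d),
    add_zero]

lemma glue_div_pow_sub (hp : 0 < p) {i : ℕ} (hi : i ≤ r) :
    (fun d => glue p r U U' d / p ^ (r - i)) = glue p i (fun d => U d / p ^ (r - i)) U' := by
  funext d
  rw [glue, glue, ← Nat.sub_add_cancel hi, pow_add, Nat.add_sub_cancel,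
    mul_assoc, Nat.mul_add_div (by positivity)]

lemma sigmaSum_glue_eq_mul_phiMap (hp : 0 < p) (hU : memE p D r U) (hU' : memE p D r' U')
    (h : phiMap p D r U = phiMap p D r' U') (k : ι) :
    sigmaSum D (glue p r U U') k = (p ^ (r + r') - 1) * phiMap p D r U k := by
  have h1 : 1 ≤ p ^ r := Nat.one_le_pow _ _ hp
  have h2 : 1 ≤ p ^ r' := Nat.one_le_pow _ _ hp
  have h3 : 1 ≤ p ^ (r + r') := Nat.one_le_pow _ _ hp
  rw [sigmaSum_glue, hU.sigmaSum_eq_mul_phiMap, hU'.sigmaSum_eq_mul_phiMap, ← h]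
  zify [h1, h2, h3]
  ring

lemma memE_glue (hp : 0 < p) (hU : memE p D r U) (hU' : memE p D r' U')
    (h : phiMap p D r U = phiMap p D r' U') : memE p D (r + r') (glue p r U U') := by
  refine ⟨fun d => Nat.le_sub_one_of_lt ?_, fun k => ⟨?_, ?_⟩⟩
  · calc glue p r U U' d < p ^ r * U' d + p ^ r := Nat.add_lt_add_left (hU.lt_pow hp d) _
      _ = p ^ r * (U' d + 1) := (mul_add_one _ _).symm
      _ ≤ p ^ r * p ^ r' := Nat.mul_le_mul_left _ (hU'.lt_pow hp d)
      _ = p ^ (r + r') := (pow_add _ _ _).symm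
  · rw [sigmaSum_glue_eq_mul_phiMap hp hU hU' h]
    exact dvd_mul_right _ _
  · rw [sigmaSum_glue]
    exact Nat.add_pos_right _ (hU.2 k).2

lemma phiMap_glue (hp : 1 < p) (hr' : 0 < r') (hU : memE p D r U) (hU' : memE p D r' U')
    (h : phiMap p D r U = phiMap p D r' U') :
    phiMap p D (r + r') (glue p r U U') = phiMap p D r U := by
  funext k
  rw [phiMap, sigmaSum_glue_eq_mul_phiMap (by omega) hU hU' h,
    Nat.mul_div_cancel_left _ (Nat.sub_pos_of_lt (Nat.one_lt_pow (by omega) hp))]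

lemma minimalSol_glue (hp : 1 < p) (hU : minimalSol p D r U) (hU' : minimalSol p D r' U')
    (h : phiMap p D r U = phiMap p D r' U') : minimalSol p D (r + r') (glue p r U U') := by
  refine ⟨memE_glue (by omega) hU.1 hU'.1 h, ?_⟩
  rw [spU_glue hp (hU.1.lt_pow (by omega)), Nat.cast_add, hU.2, hU'.2]
  push_cast
  ring

lemma suppMap_glue_natCast_of_le (hp : 1 < p) (hr' : 0 < r') (hU : memE p D r U)
    (hU' : memE p D r' U') (h : phiMap p D r U = phiMap p D r' U') {i : ℕ} (hi : i ≤ r') :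
    suppMap p D (r + r') (glue p r U U') i = suppMap p D r' U' i := by
  have hp0 : 0 < p := by omega
  have hV := memE_glue hp0 hU hU' h
  rw [suppMap_natCast hp0 (hV.lt_pow hp0), suppMap_natCast hp0 (hU'.lt_pow hp0)]
  funext k
  have hVi := phiMap_shiftE_iterate_add hp (by omega) hV (show i ≤ r + r' by omega) k
  have hU'i := phiMap_shiftE_iterate_add hp hr' hU' hi k
  rw [Nat.add_sub_assoc hi, glue_div_pow_add (hU.lt_pow hp0), phiMap_glue hp hr' hU hU' h, h]
    at hVi
  omega

lemma suppMap_glue_natCast_add (hp : 1 < p) (hr : 0 < r) (hr' : 0 < r') (hU : memE p D r U)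
    (hU' : memE p D r' U') (h : phiMap p D r U = phiMap p D r' U') {i : ℕ} (hi : i ≤ r) :
    suppMap p D (r + r') (glue p r U U') (i + r' : ℕ) = suppMap p D r U i := by
  have hp0 : 0 < p := by omega
  have hV := memE_glue hp0 hU hU' h
  rw [suppMap_natCast hp0 (hV.lt_pow hp0), suppMap_natCast hp0 (hU.lt_pow hp0)]
  funext k
  have hVi := phiMap_shiftE_iterate_add hp (by omega) hV (show i + r' ≤ r + r' by omega) k
  have hUi := phiMap_shiftE_iterate_add hp hr hU hi k
  rw [Nat.add_sub_add_right, glue_div_pow_sub hp0 hi, sigmaSum_glue,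
    hU'.sigmaSum_eq_mul_phiMap, ← h, phiMap_glue hp hr' hU hU' h] at hVi
  have hpow : p ^ i * ((p ^ r' - 1) * phiMap p D r U k) + p ^ i * phiMap p D r U k
      = p ^ (i + r') * phiMap p D r U k := by
    rw [← mul_add, ← add_one_mul, Nat.sub_add_cancel (Nat.one_le_pow _ _ hp0), ← mul_assoc,
      pow_add]
  omega

end Glue

theorem glue_minimal_general (p : ℕ) (hp : p.Prime) {ι : Type}
    (D : Finset (ι → ℕ))
    (r r' : ℕ) (hr : 1 ≤ r) (hr' : 1 ≤ r')
    (U U' : D → ℕ) (hU : minimalSol p D r U) (hU' : minimalSol p D r' U')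
    (h0 : suppMap p D r U 0 = suppMap p D r' U' 0)
    (V : D → ℕ) (hV : V = fun d => p ^ r * U' d + U d) :
    minimalSol p D (r + r') V ∧
    (∀ i : ℕ, i ≤ r' →
      suppMap p D (r + r') V ((i : ℕ) : ZMod (r + r')) = suppMap p D r' U' ((i : ℕ) : ZMod r')) ∧
    (∀ i : ℕ, 1 ≤ i → i ≤ r - 1 →
      suppMap p D (r + r') V (((i + r' : ℕ)) : ZMod (r + r')) = suppMap p D r U ((i : ℕ) : ZMod r)) := by
  obtain rfl : V = glue p r U U' := hV
  have h : phiMap p D r U = phiMap p D r' U' := by rwa [suppMap_zero, suppMap_zero] at h0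
  exact ⟨minimalSol_glue hp.one_lt hU hU' h,
    fun i hi => suppMap_glue_natCast_of_le hp.one_lt hr' hU.1 hU'.1 h hi,
    fun i _ hi => suppMap_glue_natCast_add hp.one_lt hr hr' hU.1 hU'.1 h (by omega)⟩

/-- Gluing two minimal solutions with matching supports at `0` yields a minimal
solution of length `r + r'`, with support obtained by concatenation. -/
theorem glue_minimal (p : ℕ) (hp : p.Prime) {ι : Type} [Fintype ι] [Nonempty ι]
    (D : Finset (ι → ℕ)) (hD : D.Nonempty)
    (hcoord : ∀ k : ι, ∃ d ∈ D, 0 < d k)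
    (r r' : ℕ) (hr : 1 ≤ r) (hr' : 1 ≤ r')
    (U U' : D → ℕ) (hU : minimalSol p D r U) (hU' : minimalSol p D r' U')
    (h0 : suppMap p D r U 0 = suppMap p D r' U' 0)
    (V : D → ℕ) (hV : V = fun d => p ^ r * U' d + U d) :
    minimalSol p D (r + r') V ∧
    (∀ i : ℕ, i ≤ r' →
      suppMap p D (r + r') V ((i : ℕ) : ZMod (r + r')) = suppMap p D r' U' ((i : ℕ) : ZMod r')) ∧
    (∀ i : ℕ, 1 ≤ i → i ≤ r - 1 →
      suppMap p D (r + r') V (((i + r' : ℕ)) : ZMod (r + r')) = suppMap p D r U ((i : ℕ) : ZMod r)) :=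
  glue_minimal_general p hp D r r' hr hr' U U' hU hU' h0 V hV
end
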